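/- arXiv:1601.07380 — 10 statements merged into one kernel-verified Lean document; each statement's English description precedes it below -/
import Mathlib

section
/- Let $k : V \times V \to \mathbb{R}$ be positive definite with RKHS $\mathscr{H}$, let $F \subseteq V$ be finite with $x_1 \in F$ and $K_F$ invertible, and suppose $\delta_{x_1} \in \mathscr{H}$. Then $(K_F^{-1}\delta_{x_1})(x_1) = \|P_F \delta_{x_1}\|_{\mathscr{H}}^2$, i.e., the $(x_1,x_1)$ entry of the inverse Gram matrix equals the squared norm of the projection of the point mass onto $\mathrm{span}\{k_x : x \in F\}$. -/
open Matrix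

/-!
Write the projection as `w = ∑ aᵢ K xᵢ`. Since `g - w` is orthogonal to every `K x` with `x ∈ F`,
`⟪K x, w⟫ = ⟪K x, g⟫ = δ_{x₁}(x)`, i.e. `K_F a = δ_{x₁}`, so `a = K_F⁻¹ δ_{x₁}`. Expanding,
`‖w‖² = aᵀ K_F a = a ⬝ δ_{x₁} = a(x₁)`.
-/

open scoped InnerProductSpace

section GramInverse

variable {ι E : Type*} [Fintype ι] [NormedAddCommGroup E] [InnerProductSpace ℝ E]

theorem inner_sum_smul_eq_gram_mulVec (v : ι → E) (a : ι → ℝ) (j : ι) :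
    ⟪v j, ∑ i, a i • v i⟫_ℝ = (gram ℝ v *ᵥ a) j := by
  simp [inner_sum, real_inner_smul_right, mulVec, dotProduct, mul_comm]

theorem norm_sq_eq_inv_gram_mulVec_dotProduct [DecidableEq ι] {v : ι → E} {u : E} {b : ι → ℝ}
    (hu : u ∈ Submodule.span ℝ (Set.range v)) (hG : IsUnit (gram ℝ v))
    (hb : ∀ j, ⟪v j, u⟫_ℝ = b j) :
    ‖u‖ ^ 2 = (gram ℝ v)⁻¹ *ᵥ b ⬝ᵥ b := by
  obtain ⟨a, rfl⟩ := (Submodule.mem_span_range_iff_exists_fun ℝ).1 hu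
  have hGa : gram ℝ v *ᵥ a = b := funext fun j => by rw [← hb, inner_sum_smul_eq_gram_mulVec]
  have ha : (gram ℝ v)⁻¹ *ᵥ b = a := by
    rw [← hGa, mulVec_mulVec, nonsing_inv_mul _ ((isUnit_iff_isUnit_det _).1 hG), one_mulVec]
  rw [ha, ← hGa, ← real_inner_self_eq_norm_sq, ← star_dotProduct_gram_mulVec, star_trivial]

end GramInverse

theorem inner_eq_of_sub_mem_orthogonal {𝕜 E : Type*} [RCLike 𝕜] [NormedAddCommGroup E]
    [InnerProductSpace 𝕜 E] {S : Submodule 𝕜 E} {v g w : E} (hv : v ∈ S) (h : g - w ∈ Sᗮ) :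
    ⟪v, w⟫_𝕜 = ⟪v, g⟫_𝕜 := by
  rw [← sub_eq_zero, ← inner_sub_right, ← neg_sub, inner_neg_right,
    Submodule.inner_right_of_mem_orthogonal hv h, neg_zero]

theorem stmt_3_general {V H : Type*} [DecidableEq V]
    [NormedAddCommGroup H] [InnerProductSpace ℝ H]
    (k : V → V → ℝ) (K : V → H)
    (hk : ∀ x y, (inner ℝ (K x) (K y) : ℝ) = k x y)
    (F : Finset V) (x1 : V) (hx1 : x1 ∈ F)
    (KF : Matrix F F ℝ) (hKF : ∀ i j : F, KF i j = k i j)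
    (hinv : IsUnit KF)
    (g : H) (hg : ∀ x, (inner ℝ (K x) g : ℝ) = if x = x1 then 1 else 0)
    (w : H)
    (hw_mem : w ∈ Submodule.span ℝ (K '' (F : Set V)))
    (hw_perp : g - w ∈ (Submodule.span ℝ (K '' (F : Set V)))ᗮ) :
    (KF⁻¹ *ᵥ fun i : F => if (i : V) = x1 then (1 : ℝ) else 0) ⟨x1, hx1⟩
      = ‖w‖ ^ 2 := by
  have hKF_gram : KF = gram ℝ fun i : F => K i := by ext i j; rw [hKF, gram_apply, hk]
  have hδ : (fun i : F => if (i : V) = x1 then (1 : ℝ) else 0) = Pi.single ⟨x1, hx1⟩ 1 := by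
    ext i; simp [Pi.single_apply, Subtype.ext_iff]
  have hspan : Submodule.span ℝ (K '' (F : Set V))
      = Submodule.span ℝ (Set.range fun i : F => K i) := by
    rw [Set.image_eq_range]; rfl
  rw [hspan] at hw_mem hw_perp
  have hb : ∀ j : F, ⟪K j, w⟫_ℝ = if (j : V) = x1 then 1 else 0 := fun j => by
    rw [inner_eq_of_sub_mem_orthogonal (Submodule.subset_span (Set.mem_range_self j)) hw_perp, hg]
  rw [norm_sq_eq_inv_gram_mulVec_dotProduct hw_mem (hKF_gram ▸ hinv) hb, ← hKF_gram, hδ,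
    dotProduct_single, mul_one]

/-- Setting as in Statement 2: `k` real positive definite on `V`
with RKHS `H` (kernel vectors `K x`, `⟪K x, K y⟫ = k x y`), `F` finite,
`x1 ∈ F`, Gram matrix `KF` invertible, `δ_{x1} ∈ H` represented by `g`.
If `w` is the orthogonal projection of `g` onto `span {K x : x ∈ F}`
(characterized by `w ∈ span` and `g - w ⊥ span`), then
`(KF⁻¹ δ_{x1}) x1 = ‖w‖²`. -/
theorem stmt_3 {V H : Type*} [DecidableEq V]
    [NormedAddCommGroup H] [InnerProductSpace ℝ H] [CompleteSpace H]
    (k : V → V → ℝ) (K : V → H)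
    (hk : ∀ x y, (inner ℝ (K x) (K y) : ℝ) = k x y)
    (F : Finset V) (x1 : V) (hx1 : x1 ∈ F)
    (KF : Matrix F F ℝ) (hKF : ∀ i j : F, KF i j = k i j)
    (hinv : IsUnit KF)
    (g : H) (hg : ∀ x, (inner ℝ (K x) g : ℝ) = if x = x1 then 1 else 0)
    (w : H)
    (hw_mem : w ∈ Submodule.span ℝ (K '' (F : Set V)))
    (hw_perp : g - w ∈ (Submodule.span ℝ (K '' (F : Set V)))ᗮ) :
    (KF⁻¹ *ᵥ fun i : F => if (i : V) = x1 then (1 : ℝ) else 0) ⟨x1, hx1⟩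
      = ‖w‖ ^ 2 :=
  stmt_3_general k K hk F x1 hx1 KF hKF hinv g hg w hw_mem hw_perp
end

section
/- Let $k : V \times V \to \mathbb{R}$ be positive definite with RKHS $\mathscr{H}$, and suppose $\delta_{x_1} \in \mathscr{H}$ and all finite Gram matrices $K_F$ are invertible. Then $\sup_{F} (K_F^{-1}\delta_{x_1})(x_1) = \|\delta_{x_1}\|_{\mathscr{H}}^2$, where the supremum is over all finite subsets $F$ of $V$ containing $x_1$. -/
/-!
For finite `F`, the coefficients `c = K_F⁻¹ δ_{x₁}` solve the normal equations of the orthogonal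
projection, so `∑ c_x k_x = P_F δ_{x₁}` and `c(x₁) = ⟪P_F δ_{x₁}, δ_{x₁}⟫ = ‖P_F δ_{x₁}‖²`.
These are bounded by `‖δ_{x₁}‖²`, and since the spaces `span {k_x : x ∈ F}` exhaust a dense
subspace, `‖δ_{x₁} - P_F δ_{x₁}‖² = ‖δ_{x₁}‖² - ‖P_F δ_{x₁}‖²` becomes arbitrarily small.
-/

open Matrix Submodule

instance Submodule.finiteDimensional_span_range {𝕜 E ι : Type*} [DivisionRing 𝕜]
    [AddCommGroup E] [Module 𝕜 E] [Finite ι] (v : ι → E) :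
    FiniteDimensional 𝕜 (span 𝕜 (Set.range v)) :=
  FiniteDimensional.span_of_finite 𝕜 (Set.finite_range v)

theorem Submodule.span_range_subset_iUnion_span_finset {α R M : Type*} [DecidableEq α]
    [Semiring R] [AddCommMonoid M] [Module R M] (v : α → M) (a : α) :
    (span R (Set.range v) : Set M) ⊆
      ⋃ F : {F : Finset α // a ∈ F}, span R (Set.range fun i : F.1 => v i) := by
  intro x hx
  obtain ⟨c, rfl⟩ := Finsupp.mem_span_range_iff_exists_finsupp.mp hx
  refine Set.mem_iUnion.mpr ⟨⟨insert a c.support, Finset.mem_insert_self _ _⟩, ?_⟩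
  exact sum_mem fun i hi => smul_mem _ _ (subset_span ⟨⟨i, Finset.mem_insert_of_mem hi⟩, rfl⟩)

section Projection

variable {𝕜 E : Type*} [RCLike 𝕜] [NormedAddCommGroup E] [InnerProductSpace 𝕜 E]

theorem iSup_norm_sq_starProjection_eq_norm_sq {ι : Type*} [Nonempty ι] (U : ι → Submodule 𝕜 E)
    [∀ i, (U i).HasOrthogonalProjection] {g : E} (hg : g ∈ closure (⋃ i, (U i : Set E))) :
    ⨆ i, ‖(U i).starProjection g‖ ^ 2 = ‖g‖ ^ 2 := by
  refine ciSup_eq_of_forall_le_of_forall_lt_exists_gt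
    (fun i => pow_le_pow_left₀ (norm_nonneg _) ((U i).norm_starProjection_apply_le g) 2)
    fun b hb => ?_
  obtain ⟨w, hw, hgw⟩ :=
    Metric.mem_closure_iff.mp hg (√(‖g‖ ^ 2 - b)) (Real.sqrt_pos.mpr (sub_pos.mpr hb))
  obtain ⟨i, hwi⟩ := Set.mem_iUnion.mp hw
  refine ⟨i, ?_⟩
  have hmin : ‖g - (U i).starProjection g‖ ≤ ‖g - w‖ := by
    rw [starProjection_minimal]
    exact ciInf_le (f := fun x : U i => ‖g - x‖) ⟨0, by rintro _ ⟨x, rfl⟩; exact norm_nonneg _⟩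
      ⟨w, hwi⟩
  have hpyth : ‖g‖ ^ 2 = ‖(U i).starProjection g‖ ^ 2 + ‖g - (U i).starProjection g‖ ^ 2 := by
    simpa using (U i).norm_sq_eq_add_norm_sq_starProjection g
  have := (Real.lt_sqrt (norm_nonneg _)).mp ((hmin.trans_eq (dist_eq_norm g w).symm).trans_lt hgw)
  linarith

variable {ι : Type*} [Fintype ι] [DecidableEq ι] (v : ι → E)

theorem starProjection_span_range_eq_sum_gram_inv_mulVec (hG : IsUnit (gram 𝕜 v)) (g : E) :
    (span 𝕜 (Set.range v)).starProjection g =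
      ∑ i, ((gram 𝕜 v)⁻¹ *ᵥ fun j => inner 𝕜 (v j) g) i • v i := by
  set d : ι → 𝕜 := fun j => inner 𝕜 (v j) g
  set c := (gram 𝕜 v)⁻¹ *ᵥ d
  have hc : gram 𝕜 v *ᵥ c = d := by
    rw [mulVec_mulVec, mul_nonsing_inv _ ((isUnit_iff_isUnit_det _).mp hG), one_mulVec]
  refine eq_starProjection_of_mem_of_inner_eq_zero
    (sum_mem fun i _ => smul_mem _ _ (subset_span ⟨i, rfl⟩)) fun w hw => ?_
  induction hw using span_induction with
  | mem _ hw =>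
    obtain ⟨j, rfl⟩ := hw
    have hj : inner 𝕜 (v j) (∑ i, c i • v i) = d j := by
      simp only [inner_sum, inner_smul_right, ← hc, mulVec, dotProduct, gram_apply, mul_comm]
    rw [inner_eq_zero_symm, inner_sub_right, hj, sub_self]
  | zero => exact inner_zero_right _
  | add _ _ _ _ h₁ h₂ => rw [inner_add_right, h₁, h₂, add_zero]
  | smul a _ _ h => rw [inner_smul_right, h, mul_zero]

end Projection

theorem norm_sq_starProjection_span_range_eq_dotProduct {ι E : Type*} [Fintype ι] [DecidableEq ι]
    [NormedAddCommGroup E] [InnerProductSpace ℝ E] (v : ι → E) (hG : IsUnit (gram ℝ v)) (g : E) :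
    ‖(span ℝ (Set.range v)).starProjection g‖ ^ 2 =
      ((gram ℝ v)⁻¹ *ᵥ fun j => inner ℝ (v j) g) ⬝ᵥ fun j => inner ℝ (v j) g := by
  set U := span ℝ (Set.range v)
  calc ‖U.starProjection g‖ ^ 2 = inner ℝ (U.starProjection g) g := by
        simpa using (U.re_inner_starProjection_eq_normSq g).symm
    _ = _ := by
        rw [starProjection_span_range_eq_sum_gram_inv_mulVec v hG, sum_inner]
        simp only [real_inner_smul_left, dotProduct]

theorem stmt_4_general {V H : Type*} [DecidableEq V]
    [NormedAddCommGroup H] [InnerProductSpace ℝ H]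
    (k : V → V → ℝ) (K : V → H)
    (hk : ∀ x y, (inner ℝ (K x) (K y) : ℝ) = k x y)
    (hdense : (Submodule.span ℝ (Set.range K)).topologicalClosure = ⊤)
    (hinv : ∀ F : Finset V, IsUnit (Matrix.of fun i j : F => k i j))
    (x1 : V) (g : H)
    (hg : ∀ x, (inner ℝ (K x) g : ℝ) = if x = x1 then 1 else 0) :
    (⨆ F : {F : Finset V // x1 ∈ F},
        ((Matrix.of fun i j : F.1 => k i j)⁻¹ *ᵥ
          fun i : F.1 => if (i : V) = x1 then (1 : ℝ) else 0) ⟨x1, F.2⟩)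
      = ‖g‖ ^ 2 := by
  have : Nonempty {F : Finset V // x1 ∈ F} := ⟨⟨{x1}, Finset.mem_singleton_self x1⟩⟩
  have hvalue : ∀ F : {F : Finset V // x1 ∈ F},
      ((Matrix.of fun i j : F.1 => k i j)⁻¹ *ᵥ
          fun i : F.1 => if (i : V) = x1 then (1 : ℝ) else 0) ⟨x1, F.2⟩ =
        ‖(span ℝ (Set.range fun i : F.1 => K i)).starProjection g‖ ^ 2 := by
    intro F
    have hgram : gram ℝ (fun i : F.1 => K i) = Matrix.of fun i j : F.1 => k i j :=
      Matrix.ext fun i j => hk i j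
    have hδ : (fun i : F.1 => if (i : V) = x1 then (1 : ℝ) else 0) = Pi.single ⟨x1, F.2⟩ 1 := by
      ext j
      simp [Pi.single_apply, Subtype.ext_iff]
    rw [norm_sq_starProjection_span_range_eq_dotProduct _ (hgram ▸ hinv F.1), hgram]
    simp only [hg, hδ, dotProduct_single_one]
  have hg_mem : g ∈ closure (span ℝ (Set.range K) : Set H) := by
    rw [← topologicalClosure_coe, hdense]
    trivial
  rw [iSup_congr hvalue]
  exact iSup_norm_sq_starProjection_eq_norm_sq _
    (closure_mono (span_range_subset_iUnion_span_finset K x1) hg_mem)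

/-- `k` real positive definite on countable `V` with RKHS `H`
(kernel vectors `K x`, `⟪K x, K y⟫ = k x y`, dense span). Suppose all finite
Gram matrices are invertible and `δ_{x1} ∈ H`, represented by `g`. Then
`sup_{F ∋ x1} (K_F⁻¹ δ_{x1}) x1 = ‖δ_{x1}‖²`. -/
theorem stmt_4 {V H : Type*} [Countable V] [DecidableEq V]
    [NormedAddCommGroup H] [InnerProductSpace ℝ H] [CompleteSpace H]
    (k : V → V → ℝ) (K : V → H)
    (hk : ∀ x y, (inner ℝ (K x) (K y) : ℝ) = k x y)
    (hdense : (Submodule.span ℝ (Set.range K)).topologicalClosure = ⊤)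
    (hinv : ∀ F : Finset V, IsUnit (Matrix.of fun i j : F => k i j))
    (x1 : V) (g : H)
    (hg : ∀ x, (inner ℝ (K x) g : ℝ) = if x = x1 then 1 else 0) :
    (⨆ F : {F : Finset V // x1 ∈ F},
        ((Matrix.of fun i j : F.1 => k i j)⁻¹ *ᵥ
          fun i : F.1 => if (i : V) = x1 then (1 : ℝ) else 0) ⟨x1, F.2⟩)
      = ‖g‖ ^ 2 :=
  stmt_4_general k K hk hdense hinv x1 g hg
end

section
/- Let $k : V \times V \to \mathbb{R}$ be a strictly positive kernel (all finite Gram matrix determinants are positive), $x \in V$, $D_F = \det K_F$ and $D'_F$ the determinant of the minor of $K_F$ obtained by deleting the row and column indexed by $x$. Then $\delta_x \in \mathscr{H}$ if and only if $\sup_{F} D'_F / D_F < \infty$, where the supremum is over finite subsets $F \ni x$. -/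
/-!
For finite `F ∋ x`, the vector `h_F = ∑ᵢ (K_F⁻¹ δ_x)ᵢ K i` satisfies `⟪K z, h_F⟫ = δ_x z` on `F`,
and it is the orthogonal projection onto `span (K '' F)` of every `h` with that property, so
`‖h‖² = ‖h_F‖² + ‖h - h_F‖²`. Its squared norm is `(K_F⁻¹)ₓₓ = D'_F / D_F` by Cramer's rule.
If `δ_x` is represented by `g`, then `‖h_F‖² ≤ ‖g‖²`. Conversely, along an increasing exhaustion
`F₀ ⊆ F₁ ⊆ ⋯` of `V`, Pythagoras gives `‖h_m - h_n‖² = ‖h_m‖² - ‖h_n‖²` for `n ≤ m`; bounded ratios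
make `(h_n)` Cauchy, and its limit represents `δ_x`.
-/

open Matrix

namespace Matrix

variable {n : Type*} [Fintype n] [DecidableEq n]

theorem det_updateRow_single_one {R : Type*} [CommRing R] (A : Matrix n n R) (a : n) :
    (A.updateRow a (Pi.single a 1)).det =
      (A.submatrix ((↑) : {i // i ≠ a} → n) (↑)).det := by
  let _ : Unique {i // ¬i ≠ a} :=
    { default := ⟨a, not_not_intro rfl⟩, uniq := fun i => Subtype.ext (not_not.mp i.2) }
  have hrow : ∀ i, ¬i ≠ a → ∀ j, j ≠ a → A.updateRow a (Pi.single a 1) i j = 0 :=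
    fun i hi j hj => by rw [not_not.mp hi, updateRow_self, Pi.single_eq_of_ne hj]
  rw [twoBlockTriangular_det _ _ hrow, det_unique (toSquareBlockProp _ fun i => ¬i ≠ a)]
  have hcorner : toSquareBlockProp (A.updateRow a (Pi.single a 1)) (fun i => ¬i ≠ a)
      default default = 1 := by
    simp [toSquareBlockProp_def, show ((default : {i // ¬i ≠ a}) : n) = a from rfl]
  rw [hcorner, mul_one]
  congr 1
  ext i j
  simp [toSquareBlockProp_def, updateRow_ne i.2]

theorem inv_apply_self_eq_det_submatrix_div {𝕜 : Type*} [Field 𝕜] (A : Matrix n n 𝕜) (a : n) :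
    A⁻¹ a a = (A.submatrix ((↑) : {i // i ≠ a} → n) (↑)).det / A.det := by
  rw [inv_def, smul_apply, smul_eq_mul, Ring.inverse_eq_inv, adjugate_apply,
    det_updateRow_single_one, div_eq_inv_mul]

end Matrix

theorem Finset.exists_monotone_cover {V : Type*} [Countable V] [DecidableEq V] (x : V) :
    ∃ F : ℕ → Finset V, Monotone F ∧ (∀ n, x ∈ F n) ∧ ∀ y, ∃ n, y ∈ F n := by
  have : Nonempty V := ⟨x⟩
  obtain ⟨s, hs⟩ := exists_surjective_nat V
  refine ⟨fun n => insert x ((range n).image s), fun n m hnm => ?_,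
    fun n => mem_insert_self _ _, fun y => ?_⟩
  · exact insert_subset_insert _ (image_subset_image (range_subset_range.2 hnm))
  · obtain ⟨m, rfl⟩ := hs y
    exact ⟨m + 1, mem_insert_of_mem (mem_image_of_mem s (self_mem_range_succ m))⟩

theorem cauchySeq_of_add_dist_sq_le {X : Type*} [PseudoMetricSpace X] {g : ℕ → X} {a : ℕ → ℝ}
    (ha : BddAbove (Set.range a)) (hg : ∀ n m, n ≤ m → a n + dist (g n) (g m) ^ 2 ≤ a m) :
    CauchySeq g := by
  have hmono : Monotone a := fun n m hnm =>
    le_of_add_le_of_nonneg_left (hg n m hnm) (sq_nonneg _)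
  have hcauchy := Metric.cauchySeq_iff'.1 (tendsto_atTop_ciSup hmono ha).cauchySeq
  refine Metric.cauchySeq_iff'.2 fun ε hε => ?_
  obtain ⟨N, hN⟩ := hcauchy (ε ^ 2) (by positivity)
  refine ⟨N, fun n hn => ?_⟩
  have hdist : dist (g n) (g N) ^ 2 < ε ^ 2 := by
    have hincr := hg N n hn
    have hclose := hN n hn
    rw [Real.dist_eq, abs_lt] at hclose
    rw [dist_comm]
    linarith
  exact (pow_lt_pow_iff_left₀ dist_nonneg hε.le two_ne_zero).1 hdist

section Interpolation

variable {V H : Type*} [DecidableEq V] [NormedAddCommGroup H] [InnerProductSpace ℝ H]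
  {k : V → V → ℝ} {K : V → H} {F : Finset V}

noncomputable def kernelMatrix (k : V → V → ℝ) (F : Finset V) : Matrix F F ℝ :=
  Matrix.of fun i j => k i j

noncomputable def interpolant (k : V → V → ℝ) (K : V → H) (F : Finset V) (v : F → ℝ) : H :=
  ∑ i, ((kernelMatrix k F)⁻¹ *ᵥ v) i • K i

theorem inner_kernel_interpolant (hk : ∀ y z, inner ℝ (K y) (K z) = k y z)
    (hF : IsUnit (kernelMatrix k F).det) (v : F → ℝ) (z : F) :
    inner ℝ (K z) (interpolant k K F v) = v z := by
  have hmul : inner ℝ (K z) (interpolant k K F v) =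
      (kernelMatrix k F *ᵥ ((kernelMatrix k F)⁻¹ *ᵥ v)) z := by
    simp only [interpolant, inner_sum, real_inner_smul_right, hk, mulVec, dotProduct, mul_comm]
    rfl
  rw [hmul, mulVec_mulVec, mul_nonsing_inv _ hF, one_mulVec]

theorem inner_interpolant_of_inner_kernel {v : F → ℝ} {h : H}
    (hh : ∀ z : F, inner ℝ (K z) h = v z) :
    inner ℝ (interpolant k K F v) h = ((kernelMatrix k F)⁻¹ *ᵥ v) ⬝ᵥ v := by
  simp [interpolant, sum_inner, real_inner_smul_left, hh, dotProduct]

theorem norm_sq_interpolant (hk : ∀ y z, inner ℝ (K y) (K z) = k y z)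
    (hF : IsUnit (kernelMatrix k F).det) (v : F → ℝ) :
    ‖interpolant k K F v‖ ^ 2 = ((kernelMatrix k F)⁻¹ *ᵥ v) ⬝ᵥ v := by
  rw [← real_inner_self_eq_norm_sq]
  exact inner_interpolant_of_inner_kernel (inner_kernel_interpolant hk hF v)

theorem norm_sq_eq_norm_sq_interpolant_add (hk : ∀ y z, inner ℝ (K y) (K z) = k y z)
    (hF : IsUnit (kernelMatrix k F).det) {v : F → ℝ} {h : H}
    (hh : ∀ z : F, inner ℝ (K z) h = v z) :
    ‖h‖ ^ 2 = ‖interpolant k K F v‖ ^ 2 + ‖h - interpolant k K F v‖ ^ 2 := by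
  have horth : inner ℝ (interpolant k K F v) (h - interpolant k K F v) = 0 := by
    rw [inner_sub_right, inner_interpolant_of_inner_kernel hh, real_inner_self_eq_norm_sq,
      norm_sq_interpolant hk hF, sub_self]
  simpa only [sq, add_sub_cancel] using norm_add_sq_eq_norm_sq_add_norm_sq_real horth

theorem norm_sq_interpolant_le (hk : ∀ y z, inner ℝ (K y) (K z) = k y z)
    (hF : IsUnit (kernelMatrix k F).det) {v : F → ℝ} {h : H}
    (hh : ∀ z : F, inner ℝ (K z) h = v z) :
    ‖interpolant k K F v‖ ^ 2 ≤ ‖h‖ ^ 2 := by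
  rw [norm_sq_eq_norm_sq_interpolant_add hk hF hh]
  exact le_add_of_nonneg_right (sq_nonneg _)

theorem norm_sq_interpolant_single (hk : ∀ y z, inner ℝ (K y) (K z) = k y z)
    (hF : IsUnit (kernelMatrix k F).det) {x : V} (hx : x ∈ F) :
    ‖interpolant k K F (Pi.single ⟨x, hx⟩ 1)‖ ^ 2 =
      (Matrix.of fun i j : {y : F // (y : V) ≠ x} => k i j).det / (kernelMatrix k F).det := by
  rw [norm_sq_interpolant hk hF, dotProduct_single_one, mulVec_single_one, col_apply,
    inv_apply_self_eq_det_submatrix_div]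
  congr 1
  exact (det_submatrix_equiv_self
    (Equiv.subtypeEquivRight fun y => (@Subtype.ext_iff _ _ y ⟨x, hx⟩).not.symm :
      {y : F // (y : V) ≠ x} ≃ {i : F // i ≠ ⟨x, hx⟩}) _).symm

theorem ite_val_eq_pi_single {x : V} (hx : x ∈ F) (z : F) :
    (if (z : V) = x then (1 : ℝ) else 0) = (Pi.single (⟨x, hx⟩ : F) (1 : ℝ) : F → ℝ) z := by
  simp [Pi.single_apply, Subtype.ext_iff]

theorem exists_inner_kernel_eq_ite_of_norm_sq_interpolant_le [Countable V] [CompleteSpace H]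
    (hk : ∀ y z, inner ℝ (K y) (K z) = k y z) (hdet : ∀ F, IsUnit (kernelMatrix k F).det)
    (x : V) (C : ℝ)
    (hC : ∀ F (hx : x ∈ F), ‖interpolant k K F (Pi.single ⟨x, hx⟩ 1)‖ ^ 2 ≤ C) :
    ∃ g : H, ∀ y, inner ℝ (K y) g = if y = x then 1 else 0 := by
  obtain ⟨F, hmono, hxF, hcover⟩ := Finset.exists_monotone_cover x
  set g : ℕ → H := fun n => interpolant k K (F n) (Pi.single ⟨x, hxF n⟩ 1)
  have hdelta : ∀ n y, y ∈ F n → inner ℝ (K y) (g n) = if y = x then 1 else 0 :=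
    fun n y hy => (inner_kernel_interpolant hk (hdet _) _ ⟨y, hy⟩).trans
      (ite_val_eq_pi_single (hxF n) ⟨y, hy⟩).symm
  have hpyth : ∀ n m, n ≤ m → ‖g m‖ ^ 2 = ‖g n‖ ^ 2 + ‖g m - g n‖ ^ 2 := fun n m hnm =>
    norm_sq_eq_norm_sq_interpolant_add hk (hdet _) fun z =>
      (hdelta m z (hmono hnm z.2)).trans (ite_val_eq_pi_single (hxF n) z)
  have hcauchy : CauchySeq g := by
    refine cauchySeq_of_add_dist_sq_le (a := fun n => ‖g n‖ ^ 2)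
      ⟨C, by rintro _ ⟨n, rfl⟩; exact hC _ _⟩ fun n m hnm => ?_
    rw [dist_comm, dist_eq_norm, hpyth n m hnm]
  obtain ⟨g₀, hg₀⟩ := cauchySeq_tendsto_of_complete hcauchy
  refine ⟨g₀, fun y => ?_⟩
  obtain ⟨N, hN⟩ := hcover y
  refine tendsto_nhds_unique (tendsto_const_nhds.inner hg₀) (tendsto_const_nhds.congr' ?_)
  filter_upwards [Filter.eventually_ge_atTop N] with n hn
  exact (hdelta n y (hmono hn hN)).symm

end Interpolation

theorem stmt_5_general {V H : Type*} [Countable V] [DecidableEq V]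
    [NormedAddCommGroup H] [InnerProductSpace ℝ H] [CompleteSpace H]
    (k : V → V → ℝ) (K : V → H)
    (hk : ∀ y z, (inner ℝ (K y) (K z) : ℝ) = k y z)
    (hstrict : ∀ F : Finset V, 0 < (Matrix.of fun i j : F => k i j).det)
    (x : V) :
    (∃ g : H, ∀ y, (inner ℝ (K y) g : ℝ) = if y = x then 1 else 0) ↔
      ∃ C : ℝ, ∀ F : Finset V, x ∈ F →
        (Matrix.of fun i j : {y : F // (y : V) ≠ x} => k i j).det
          / (Matrix.of fun i j : F => k i j).det ≤ C := by
  have hdet : ∀ F, IsUnit (kernelMatrix k F).det := fun F => (hstrict F).ne'.isUnit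
  constructor
  · rintro ⟨g, hg⟩
    refine ⟨‖g‖ ^ 2, fun F hx => (norm_sq_interpolant_single hk (hdet F) hx).symm.trans_le ?_⟩
    exact norm_sq_interpolant_le hk (hdet F) fun z => (hg z).trans (ite_val_eq_pi_single hx z)
  · rintro ⟨C, hC⟩
    exact exists_inner_kernel_eq_ite_of_norm_sq_interpolant_le hk hdet x C fun F hx =>
      (norm_sq_interpolant_single hk (hdet F) hx).trans_le (hC F hx)

/-- Let `k` be strictly positive (all finite Gram determinants
positive) on countable `V`, with RKHS `H` (kernel vectors `K y`,
`⟪K y, K z⟫ = k y z`, dense span). For fixed `x ∈ V`, write `D_F = det K_F`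
and `D'_F` for the determinant of the minor of `K_F` obtained by deleting the
row and column indexed by `x`. Then `δ_x ∈ H` iff
`sup_{F ∋ x} D'_F / D_F < ∞` (i.e. the ratios are bounded above). -/
theorem stmt_5 {V H : Type*} [Countable V] [DecidableEq V]
    [NormedAddCommGroup H] [InnerProductSpace ℝ H] [CompleteSpace H]
    (k : V → V → ℝ) (K : V → H)
    (hk : ∀ y z, (inner ℝ (K y) (K z) : ℝ) = k y z)
    (hdense : (Submodule.span ℝ (Set.range K)).topologicalClosure = ⊤)
    (hstrict : ∀ F : Finset V, 0 < (Matrix.of fun i j : F => k i j).det)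
    (x : V) :
    (∃ g : H, ∀ y, (inner ℝ (K y) g : ℝ) = if y = x then 1 else 0) ↔
      ∃ C : ℝ, ∀ F : Finset V, x ∈ F →
        (Matrix.of fun i j : {y : F // (y : V) ≠ x} => k i j).det
          / (Matrix.of fun i j : F => k i j).det ≤ C :=
  stmt_5_general k K hk hstrict x
end

section
/- Let $(V, E, c)$ be a connected network with energy Hilbert space $\mathscr{H}_E$, base point $o \in V$, and dipoles $v_x$ satisfying $f(x) - f(o) = \langle v_x, f\rangle_{\mathscr{H}_E}$. Assume every vertex has finite degree. Define the graph Laplacian $(\Delta_c f)(x) = \sum_{y \sim x} c_{xy}(f(x) - f(y))$ and the kernel $k_x(y) = \langle v_y, v_x \rangle_{\mathscr{H}_E}$. Then $(\Delta_c k_x)(y) = \delta_{x,y}$ for all $x, y \in V \setminus \{o\}$. -/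
/-!
Test the dipole `v x` against the unit mass `δ_y` at `y ≠ o`: the reproducing property gives
`⟨v x, δ_y⟩ = δ_y x - δ_y o = δ_{x,y}`. On the other hand only the finitely many edges
through `y` contribute to `⟨v x, δ_y⟩`, each in both orientations, which cancels the factor `½`;
so `⟨g, δ_y⟩ = conj ((Δ_c g) y)` for every `g`. Hence `(Δ_c (v x)) y = δ_{x,y}`. Finally
`k_x = v x - v x o`, again by the reproducing property, and `Δ_c` kills constants.
-/

open Function

/-- Finite energy of a function on a network `(V, E, c)`. -/
def FiniteEnergy {V : Type*} (E : Set (V × V)) (c : V → V → ℝ) (f : V → ℂ) : Prop :=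
  Summable fun e : E => c e.1.1 e.1.2 * ‖f e.1.1 - f e.1.2‖ ^ 2

/-- The energy inner product `⟨f, g⟩ = ½ ∑_{(x,y)∈E} c_{xy} conj(f x - f y)(g x - g y)`. -/
noncomputable def energyProd {V : Type*} (E : Set (V × V)) (c : V → V → ℝ)
    (f g : V → ℂ) : ℂ :=
  (1 / 2) * ∑' e : E,
    (c e.1.1 e.1.2 : ℂ) * (starRingEnd ℂ) (f e.1.1 - f e.1.2) * (g e.1.1 - g e.1.2)

namespace Network

variable {V : Type*} {E : Set (V × V)}

noncomputable def laplacian (E : Set (V × V)) (c : V → V → ℝ)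
    (hfin : ∀ a : V, {b : V | (a, b) ∈ E}.Finite) (g : V → ℂ) (y : V) : ℂ :=
  ∑ z ∈ (hfin y).toFinset, (c y z : ℂ) * (g y - g z)

theorem laplacian_sub_const (c : V → V → ℝ) (hfin : ∀ a : V, {b : V | (a, b) ∈ E}.Finite)
    (g : V → ℂ) (a : ℂ) (y : V) :
    laplacian E c hfin (fun w => g w - a) y = laplacian E c hfin g y := by
  simp only [laplacian, sub_sub_sub_cancel_right]

def edgeSwap (hEsym : ∀ a b : V, (a, b) ∈ E → (b, a) ∈ E) : Equiv.Perm E :=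
  Involutive.toPerm (fun e => ⟨e.1.swap, hEsym _ _ e.2⟩) fun _ => rfl

@[simp]
theorem edgeSwap_apply (hEsym : ∀ a b : V, (a, b) ∈ E → (b, a) ∈ E) (e : E) :
    (edgeSwap hEsym e : V × V) = (e : V × V).swap :=
  rfl

theorem finite_edges_fst (hfin : ∀ a : V, {b : V | (a, b) ∈ E}.Finite) (y : V) :
    {e : E | e.1.1 = y}.Finite := by
  refine (((hfin y).image fun z => (y, z)).preimage Subtype.val_injective.injOn).subset ?_
  rintro ⟨⟨a, b⟩, hab⟩ (rfl : a = y)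
  exact ⟨b, hab, rfl⟩

theorem finite_edges_snd (hEsym : ∀ a b : V, (a, b) ∈ E → (b, a) ∈ E)
    (hfin : ∀ a : V, {b : V | (a, b) ∈ E}.Finite) (y : V) :
    {e : E | e.1.2 = y}.Finite :=
  (finite_edges_fst hfin y).preimage (edgeSwap hEsym).injective.injOn

theorem tsum_edges_fst_eq_sum [DecidableEq V] {α : Type*} [AddCommMonoid α]
    [TopologicalSpace α] (hfin : ∀ a : V, {b : V | (a, b) ∈ E}.Finite) (y : V)
    (h : V × V → α) :
    ∑' e : E, (if e.1.1 = y then h e.1 else 0) = ∑ z ∈ (hfin y).toFinset, h (y, z) := by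
  let g : (hfin y).toFinset → E := fun z => ⟨(y, z), (hfin y).mem_toFinset.mp z.2⟩
  have hg : Injective g := fun z w hzw => Subtype.ext (congrArg (fun e : E => e.1.2) hzw)
  have hsupp : support (fun e : E => if e.1.1 = y then h e.1 else 0) ⊆ Set.range g := by
    rintro ⟨⟨a, b⟩, hab⟩ he
    obtain rfl : a = y := by by_contra hne; exact he (if_neg hne)
    exact ⟨⟨b, (hfin a).mem_toFinset.mpr hab⟩, rfl⟩
  rw [← hg.tsum_eq hsupp, ← Finset.tsum_subtype]
  simp [g]

variable [DecidableEq V]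

theorem finiteEnergy_single (c : V → V → ℝ) (hEsym : ∀ a b : V, (a, b) ∈ E → (b, a) ∈ E)
    (hfin : ∀ a : V, {b : V | (a, b) ∈ E}.Finite) (y : V) :
    FiniteEnergy E c (Pi.single y 1) := by
  refine summable_of_hasFiniteSupport
    (((finite_edges_fst hfin y).union (finite_edges_snd hEsym hfin y)).subset ?_)
  intro e he
  by_contra hy
  simp only [Set.mem_union, Set.mem_ofPred_eq, not_or] at hy
  simp [Pi.single_apply, hy.1, hy.2] at he

theorem energyProd_single (c : V → V → ℝ) (hEsym : ∀ a b : V, (a, b) ∈ E → (b, a) ∈ E)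
    (hcsym : ∀ a b : V, c a b = c b a) (hfin : ∀ a : V, {b : V | (a, b) ∈ E}.Finite)
    (g : V → ℂ) (y : V) :
    energyProd E c g (Pi.single y 1) = starRingEnd ℂ (laplacian E c hfin g y) := by
  set A : V × V → ℂ := fun p => (c p.1 p.2 : ℂ) * starRingEnd ℂ (g p.1 - g p.2)
  set T : E → ℂ := fun e => if e.1.1 = y then A e.1 else 0
  have hT : Summable T :=
    summable_of_hasFiniteSupport ((finite_edges_fst hfin y).subset fun e he => by
      by_contra hy; exact he (if_neg hy))
  have hTswap : Summable fun e => T (edgeSwap hEsym e) := (edgeSwap hEsym).summable_iff.mpr hT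
  have hsplit : ∀ e : E, A e * ((Pi.single y 1 : V → ℂ) e.1.1 - (Pi.single y 1 : V → ℂ) e.1.2) =
      T e + T (edgeSwap hEsym e) := by
    intro e
    simp only [A, T, edgeSwap_apply, Prod.fst_swap, Prod.snd_swap, Pi.single_apply, hcsym e.1.2]
    split_ifs <;> simp only [map_sub] <;> ring
  have hsum : ∑' e, T e = starRingEnd ℂ (laplacian E c hfin g y) := by
    rw [tsum_edges_fst_eq_sum hfin y A]
    simp [A, laplacian, map_sum]
  rw [energyProd, tsum_congr hsplit, hT.tsum_add hTswap, Equiv.tsum_eq, hsum]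
  ring

theorem laplacian_dipole (c : V → V → ℝ) (hEsym : ∀ a b : V, (a, b) ∈ E → (b, a) ∈ E)
    (hcsym : ∀ a b : V, c a b = c b a) (hfin : ∀ a : V, {b : V | (a, b) ∈ E}.Finite)
    {o : V} {v : V → V → ℂ}
    (hdip : ∀ (x : V) (f : V → ℂ), FiniteEnergy E c f → f x - f o = energyProd E c (v x) f)
    (x : V) {y : V} (hy : y ≠ o) :
    laplacian E c hfin (v x) y = if x = y then 1 else 0 := by
  have h := hdip x (Pi.single y 1) (finiteEnergy_single c hEsym hfin y)
  rw [energyProd_single c hEsym hcsym hfin, Pi.single_apply, Pi.single_apply, if_neg hy.symm,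
    sub_zero] at h
  rw [← Complex.conj_conj (laplacian E c hfin (v x) y), ← h]
  split_ifs <;> simp

end Network

theorem stmt_8_general {V : Type*} [DecidableEq V]
    (E : Set (V × V)) (hEsym : ∀ a b : V, (a, b) ∈ E → (b, a) ∈ E)
    (c : V → V → ℝ) (hcsym : ∀ a b : V, c a b = c b a)
    (hfin : ∀ a : V, {b : V | (a, b) ∈ E}.Finite)
    (o : V) (v : V → V → ℂ)
    (hvE : ∀ x : V, FiniteEnergy E c (v x))
    (hdip : ∀ (x : V) (f : V → ℂ), FiniteEnergy E c f →
      f x - f o = energyProd E c (v x) f)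
    (x y : V) (hy : y ≠ o) :
    (∑ z ∈ (hfin y).toFinset,
        (c y z : ℂ) * (energyProd E c (v y) (v x) - energyProd E c (v z) (v x)))
      = if x = y then 1 else 0 := by
  have hkernel : (fun w => energyProd E c (v w) (v x)) = fun w => v x w - v x o :=
    funext fun w => (hdip w (v x) (hvE x)).symm
  change Network.laplacian E c hfin (fun w => energyProd E c (v w) (v x)) y = _
  rw [hkernel, Network.laplacian_sub_const, Network.laplacian_dipole c hEsym hcsym hfin hdip x hy]

/-- Let `(V, E, c)` be a connected network in which every vertex
has finite degree, with base point `o` and dipoles `v x` of finite energy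
satisfying `f x - f o = ⟨v x, f⟩_{H_E}` for all finite-energy `f`. Define the
kernel `k_x (y) = ⟨v y, v x⟩_{H_E}` and the graph Laplacian
`(Δ_c g)(y) = ∑_{z ∼ y} c_{yz} (g y - g z)`. Then `(Δ_c k_x)(y) = δ_{x,y}`
for all `x, y ∈ V \ {o}`. -/
theorem stmt_8 {V : Type*} [Countable V] [DecidableEq V]
    (E : Set (V × V)) (hEsym : ∀ a b : V, (a, b) ∈ E → (b, a) ∈ E)
    (hloop : ∀ a : V, (a, a) ∉ E)
    (c : V → V → ℝ) (hcsym : ∀ a b : V, c a b = c b a)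
    (hcpos : ∀ p ∈ E, 0 < c p.1 p.2)
    (hconn : ∀ a b : V, Relation.ReflTransGen (fun s t => (s, t) ∈ E) a b)
    (hfin : ∀ a : V, {b : V | (a, b) ∈ E}.Finite)
    (o : V) (v : V → V → ℂ)
    (hvE : ∀ x : V, FiniteEnergy E c (v x))
    (hdip : ∀ (x : V) (f : V → ℂ), FiniteEnergy E c f →
      f x - f o = energyProd E c (v x) f)
    (x y : V) (hx : x ≠ o) (hy : y ≠ o) :
    (∑ z ∈ (hfin y).toFinset,
        (c y z : ℂ) * (energyProd E c (v y) (v x) - energyProd E c (v z) (v x)))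
      = if x = y then 1 else 0 :=
  stmt_8_general E hEsym c hcsym hfin o v hvE hdip x y hy
end

section
/- Let $k : V \times V \to \mathbb{C}$ be positive definite on countable $V$ with RKHS $\mathscr{H}$ satisfying $\delta_x \in \mathscr{H}$ for all $x \in V$, and let $(A,B)$ be the associated symmetric pair ($A\delta_x = \delta_x$, $Bk_x = \delta_x$). Then $k_x \in \mathrm{dom}(B^* \overline{B})$ for all $x \in V$; equivalently, $\delta_x \in \mathrm{dom}(B^*)$ for every $x \in V$. -/
/-! Since the point mass `δ_x` is represented by the vector `D x` of `H`, the coefficient `η x` of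
`f = ∑ η y • k_y` is the conjugate of `⟪f, D x⟫`, so Cauchy–Schwarz gives the bound with
`C = ‖D x‖²`. -/

open ComplexConjugate

section Biorthogonal

variable {V 𝕜 H : Type*} [RCLike 𝕜] [NormedAddCommGroup H] [InnerProductSpace 𝕜 H]
  [DecidableEq V] {K : V → H} {d : H} {x : V}

theorem inner_sum_smul_eq_conj_of_biorthogonal
    (hd : ∀ y, (inner 𝕜 (K y) d : 𝕜) = if y = x then 1 else 0) (η : V →₀ 𝕜) :
    (inner 𝕜 (∑ y ∈ η.support, η y • K y) d : 𝕜) = conj (η x) := by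
  simp +contextual [sum_inner, inner_smul_left, hd]

theorem norm_apply_le_of_biorthogonal
    (hd : ∀ y, (inner 𝕜 (K y) d : 𝕜) = if y = x then 1 else 0) (η : V →₀ 𝕜) :
    ‖η x‖ ≤ ‖d‖ * ‖∑ y ∈ η.support, η y • K y‖ :=
  calc ‖η x‖ = ‖(inner 𝕜 (∑ y ∈ η.support, η y • K y) d : 𝕜)‖ := by
        rw [inner_sum_smul_eq_conj_of_biorthogonal hd, RCLike.norm_conj]
    _ ≤ ‖∑ y ∈ η.support, η y • K y‖ * ‖d‖ := norm_inner_le_norm _ _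
    _ = ‖d‖ * ‖∑ y ∈ η.support, η y • K y‖ := mul_comm _ _

end Biorthogonal

theorem stmt_11_general {V H : Type*} [DecidableEq V]
    [NormedAddCommGroup H] [InnerProductSpace ℂ H]
    (K : V → H)
    (D : V → H)
    (hD : ∀ x y, (inner ℂ (K y) (D x) : ℂ) = if y = x then 1 else 0)
    (x : V) :
    ∃ C : ℝ, ∀ η : V →₀ ℂ,
      ‖η x‖ ^ 2 ≤ C * ‖∑ y ∈ η.support, η y • K y‖ ^ 2 := by
  refine ⟨‖D x‖ ^ 2, fun η => ?_⟩
  calc ‖η x‖ ^ 2 ≤ (‖D x‖ * ‖∑ y ∈ η.support, η y • K y‖) ^ 2 := by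
        gcongr
        exact norm_apply_le_of_biorthogonal (hD x) η
    _ = ‖D x‖ ^ 2 * ‖∑ y ∈ η.support, η y • K y‖ ^ 2 := mul_pow _ _ _

/-- Let `k` be positive definite on countable `V` with RKHS `H`
(kernel vectors `K x`, dense span) containing all point masses (`D x`
represents `δ_x`: `⟪K y, D x⟫ = δ_{xy}`), and let `(A, B)` be the associated
symmetric pair (`B k_x = δ_x` on `dom B = span{k_x}`). Then
`k_x ∈ dom (B* ∘ closure B)` for every `x`; equivalently `δ_x ∈ dom B*`, i.e.
there is `C < ∞` with `|⟨δ_x, B f⟩_{ℓ²}|² ≤ C ‖f‖²_H` for all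
`f = ∑ η y • k_y ∈ dom B` (where `⟨δ_x, B f⟩_{ℓ²} = η x`). -/
theorem stmt_11 {V H : Type*} [Countable V] [DecidableEq V]
    [NormedAddCommGroup H] [InnerProductSpace ℂ H] [CompleteSpace H]
    (k : V → V → ℂ) (K : V → H)
    (hk : ∀ x y, (inner ℂ (K x) (K y) : ℂ) = k x y)
    (hdense : (Submodule.span ℂ (Set.range K)).topologicalClosure = ⊤)
    (D : V → H)
    (hD : ∀ x y, (inner ℂ (K y) (D x) : ℂ) = if y = x then 1 else 0)
    (x : V) :
    ∃ C : ℝ, ∀ η : V →₀ ℂ,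
      ‖η x‖ ^ 2 ≤ C * ‖∑ y ∈ η.support, η y • K y‖ ^ 2 :=
  stmt_11_general K D hD x
end

section
/- Let $k, V, \mathscr{H}$ be as above, with $\delta_x \in \mathscr{H}$ for all $x$, and $A : \ell^2(V) \to \mathscr{H}$ the densely defined operator $A\delta_x = \delta_x$. Fix $x \in V$. Then $\delta_x \in \mathrm{dom}(A^*\overline{A})$ if and only if $\sum_{y \in V} |\langle \delta_x, \delta_y \rangle_{\mathscr{H}}|^2 < \infty$, i.e., the row function $y \mapsto \langle \delta_x, \delta_y\rangle_{\mathscr{H}}$ lies in $\ell^2(V)$. -/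
/-!
Expanding `⟨A ξ, δ_x⟩` turns the bound into the boundedness, in `ℓ²` norm, of the functional
`ξ ↦ ∑ conj (ξ y) f y` on finitely supported `ξ`, where `f y = ⟨δ_y, δ_x⟩`. If `f ∈ ℓ²` this is
Cauchy–Schwarz. Conversely, testing against the truncation `ξ = f · 𝟙_s` gives `T² ≤ C T` for
`T = ∑_{y ∈ s} |f y|²`, so the partial sums of `|f|²` are bounded by `max C 0`.
-/

open Finset ComplexConjugate

section

variable {V 𝕜 : Type*} [RCLike 𝕜]

theorem norm_sum_conj_mul_sq_le_tsum_mul {f : V → 𝕜} (hf : Summable fun y => ‖f y‖ ^ 2)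
    (s : Finset V) (ξ : V → 𝕜) :
    ‖∑ y ∈ s, conj (ξ y) * f y‖ ^ 2 ≤ (∑' y, ‖f y‖ ^ 2) * ∑ y ∈ s, ‖ξ y‖ ^ 2 :=
  calc ‖∑ y ∈ s, conj (ξ y) * f y‖ ^ 2
      ≤ (∑ y ∈ s, ‖ξ y‖ * ‖f y‖) ^ 2 := by
        gcongr
        refine (norm_sum_le _ _).trans_eq (sum_congr rfl fun y _ => ?_)
        rw [norm_mul, RCLike.norm_conj]
    _ ≤ (∑ y ∈ s, ‖ξ y‖ ^ 2) * ∑ y ∈ s, ‖f y‖ ^ 2 := sum_mul_sq_le_sq_mul_sq _ _ _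
    _ ≤ (∑ y ∈ s, ‖ξ y‖ ^ 2) * ∑' y, ‖f y‖ ^ 2 := by
        gcongr
        exact hf.sum_le_tsum _ fun y _ => sq_nonneg _
    _ = (∑' y, ‖f y‖ ^ 2) * ∑ y ∈ s, ‖ξ y‖ ^ 2 := mul_comm _ _

theorem sum_norm_sq_le_of_sum_conj_mul_bound {f : V → 𝕜} {C : ℝ}
    (hC : ∀ ξ : V →₀ 𝕜,
      ‖∑ y ∈ ξ.support, conj (ξ y) * f y‖ ^ 2 ≤ C * ∑ y ∈ ξ.support, ‖ξ y‖ ^ 2)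
    (s : Finset V) : ∑ y ∈ s, ‖f y‖ ^ 2 ≤ max C 0 := by
  set ξ : V →₀ 𝕜 := Finsupp.indicator s fun y _ => f y
  have hsupp : ξ.support ⊆ s := Finsupp.support_indicator_subset _ _
  have hξ : ∀ y ∈ s, ξ y = f y := fun y hy => Finsupp.indicator_of_mem hy _
  have hpair : ∑ y ∈ ξ.support, conj (ξ y) * f y = ((∑ y ∈ s, ‖f y‖ ^ 2 : ℝ) : 𝕜) := by
    refine (ξ.sum_of_support_subset hsupp (fun y a => conj a * f y) (by simp)).trans ?_
    push_cast
    exact sum_congr rfl fun y hy => by rw [hξ y hy, RCLike.conj_mul]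
  have hnorm : ∑ y ∈ ξ.support, ‖ξ y‖ ^ 2 = ∑ y ∈ s, ‖f y‖ ^ 2 := by
    refine (ξ.sum_of_support_subset hsupp (fun _ a => ‖a‖ ^ 2) (by simp)).trans ?_
    exact sum_congr rfl fun y hy => by rw [hξ y hy]
  set T := ∑ y ∈ s, ‖f y‖ ^ 2
  have hT : 0 ≤ T := sum_nonneg fun y _ => sq_nonneg _
  have hTC : T ^ 2 ≤ C * T := by
    simpa [hpair, hnorm, RCLike.norm_ofReal, abs_of_nonneg hT] using hC ξ
  rcases hT.eq_or_lt with hT0 | hT0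
  · exact hT0 ▸ le_max_right _ _
  · exact (le_of_mul_le_mul_right (by nlinarith) hT0).trans (le_max_left _ _)

theorem exists_sum_conj_mul_bound_iff_summable (f : V → 𝕜) :
    (∃ C : ℝ, ∀ ξ : V →₀ 𝕜,
        ‖∑ y ∈ ξ.support, conj (ξ y) * f y‖ ^ 2 ≤ C * ∑ y ∈ ξ.support, ‖ξ y‖ ^ 2) ↔
      Summable fun y => ‖f y‖ ^ 2 :=
  ⟨fun ⟨_, hC⟩ => summable_of_sum_le (fun _ => sq_nonneg _)
      (sum_norm_sq_le_of_sum_conj_mul_bound hC),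
    fun hf => ⟨_, fun ξ => norm_sum_conj_mul_sq_le_tsum_mul hf ξ.support ξ⟩⟩

end

theorem stmt_12_general {V H : Type*}
    [NormedAddCommGroup H] [InnerProductSpace ℂ H]
    (D : V → H)
    (x : V) :
    (∃ C : ℝ, ∀ ξ : V →₀ ℂ,
        ‖(inner ℂ (∑ y ∈ ξ.support, ξ y • D y) (D x) : ℂ)‖ ^ 2 ≤
          C * ∑ y ∈ ξ.support, ‖ξ y‖ ^ 2) ↔
      Summable fun y : V => ‖(inner ℂ (D x) (D y) : ℂ)‖ ^ 2 := by
  simp_rw [sum_inner, inner_smul_left, norm_inner_symm (D x)]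
  exact exists_sum_conj_mul_bound_iff_summable fun y => inner ℂ (D y) (D x)

/-- Let `k` be positive definite on countable `V` with RKHS `H`
(kernel vectors `K x`, dense span) containing all point masses (`D x`
represents `δ_x`), and `A : ℓ²(V) ⊇ span{δ_x} → H`, `A δ_x = δ_x`. For fixed
`x`, `δ_x ∈ dom (A* ∘ closure A)` — i.e. `D x ∈ dom A*`, meaning there is
`C < ∞` with `|⟨A ξ, δ_x⟩_H|² ≤ C ‖ξ‖²_{ℓ²}` for all finitely supported `ξ` —
if and only if the row function `y ↦ ⟨δ_x, δ_y⟩_H` lies in `ℓ²(V)`. -/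
theorem stmt_12 {V H : Type*} [Countable V] [DecidableEq V]
    [NormedAddCommGroup H] [InnerProductSpace ℂ H] [CompleteSpace H]
    (k : V → V → ℂ) (K : V → H)
    (hk : ∀ x y, (inner ℂ (K x) (K y) : ℂ) = k x y)
    (hdense : (Submodule.span ℂ (Set.range K)).topologicalClosure = ⊤)
    (D : V → H)
    (hD : ∀ x y, (inner ℂ (K y) (D x) : ℂ) = if y = x then 1 else 0)
    (x : V) :
    (∃ C : ℝ, ∀ ξ : V →₀ ℂ,
        ‖(inner ℂ (∑ y ∈ ξ.support, ξ y • D y) (D x) : ℂ)‖ ^ 2 ≤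
          C * ∑ y ∈ ξ.support, ‖ξ y‖ ^ 2) ↔
      Summable fun y : V => ‖(inner ℂ (D x) (D y) : ℂ)‖ ^ 2 :=
  stmt_12_general D x
end

section
/- Let $(V,E,c)$ be a connected network, $x \in V$ with finite total conductance $c(x) = \sum_{y\sim x} c_{xy} < \infty$ for all vertices, and let $\mu_x^{(A)}$ be the spectral measure $\mu_x^{(A)}(\cdot) = \|P^{(A)}(\cdot)\delta_x\|_{\ell^2}^2$ of the selfadjoint operator $A^*\overline{A}$. Then: (1) the first moment is $\int_0^\infty \lambda \, d\mu_x^{(A)}(\lambda) = c(x)$; (2) the second moment is $\int_0^\infty \lambda^2 \, d\mu_x^{(A)}(\lambda) = c(x)^2 + \sum_{y\sim x} c_{xy}^2$; (3) the variance is $\mathrm{cov}(\mu_x^{(A)}) = \sum_{y\sim x} c_{xy}^2 \le c(x)^2$. -/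
open MeasureTheory

/-- The point mass `δ_x` as a complex-valued function. -/
noncomputable def pointMass {V : Type*} [DecidableEq V] (x : V) : V → ℂ :=
  fun z => if z = x then 1 else 0

/-! `⟨f, δ_x⟩_{H_E}` is the conjugated Laplacian `∑_{y∼x} c_{xy} conj (f x - f y)`, so
`⟨δ_x, δ_x⟩ = c(x)` and `⟨δ_y, δ_x⟩ = -c_{xy}` for `y ≠ x`. The two general moment identities then
give (1) and (2); (3) is `∫ (λ - m)² = ∫ λ² - m²` together with `∑ c_{xy}² ≤ (∑ c_{xy})²` for
nonnegative conductances. -/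

open ProbabilityTheory ComplexConjugate

lemma integral_sub_sq_eq_of_moments {μ : Measure ℝ} [IsProbabilityMeasure μ] {m q : ℝ}
    (h1 : ∫ t, t ∂μ = m) (h2 : ∫ t, t ^ 2 ∂μ = m ^ 2 + q) (hq : 0 ≤ q) :
    ∫ t, (t - m) ^ 2 ∂μ = q := by
  by_cases hint : Integrable (fun t : ℝ => t ^ 2) μ
  · have hX : MemLp (id : ℝ → ℝ) 2 μ :=
      (memLp_two_iff_integrable_sq aestronglyMeasurable_id).2 hint
    have hvar := variance_eq_sub hX
    rw [variance_eq_integral measurable_id.aemeasurable] at hvar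
    simp only [id, Pi.pow_apply] at hvar
    rw [h1] at hvar
    rw [hvar, h2]
    ring
  · -- the junk value `∫ t ^ 2 ∂μ = 0` forces `m = q = 0`
    have h0 : ∫ t, t ^ 2 ∂μ = 0 := integral_undef hint
    have hm : m = 0 := by nlinarith
    have hq0 : q = 0 := by nlinarith
    simpa [hm, hq0] using h0

section Summable

variable {ι : Type*} {f : ι → ℝ}

lemma sq_le_tsum_mul_of_nonneg (hf0 : ∀ i, 0 ≤ f i) (hf : Summable f) (i : ι) :
    f i ^ 2 ≤ (∑' j, f j) * f i := by
  rw [sq]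
  exact mul_le_mul_of_nonneg_right (hf.le_tsum i fun j _ => hf0 j) (hf0 i)

lemma summable_sq_of_nonneg (hf0 : ∀ i, 0 ≤ f i) (hf : Summable f) :
    Summable fun i => f i ^ 2 :=
  Summable.of_nonneg_of_le (fun _ => sq_nonneg _) (sq_le_tsum_mul_of_nonneg hf0 hf)
    (hf.mul_left _)

lemma tsum_sq_le_sq_tsum_of_nonneg (hf0 : ∀ i, 0 ≤ f i) (hf : Summable f) :
    ∑' i, f i ^ 2 ≤ (∑' i, f i) ^ 2 :=
  calc ∑' i, f i ^ 2 ≤ ∑' i, (∑' j, f j) * f i :=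
        (summable_sq_of_nonneg hf0 hf).tsum_le_tsum (sq_le_tsum_mul_of_nonneg hf0 hf)
          (hf.mul_left _)
    _ = (∑' i, f i) ^ 2 := by rw [tsum_mul_left, sq]

end Summable

section Network

variable {V : Type*} [DecidableEq V] {E : Set (V × V)}

lemma hasSum_edges_ite_fst_iff {M : Type*} [AddCommMonoid M] [TopologicalSpace M]
    (x : V) (f : V → M) (a : M) :
    HasSum (fun e : E => if e.1.1 = x then f e.1.2 else 0) a ↔
      HasSum (fun y : {y // (x, y) ∈ E} => f y) a := by
  have hinj : Function.Injective fun y : {y // (x, y) ∈ E} => (⟨(x, y), y.2⟩ : E) :=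
    fun y z h => Subtype.ext (congrArg (fun e : E => e.1.2) h)
  rw [← hinj.hasSum_iff]
  · simp [Function.comp_def]
  rintro ⟨⟨a, b⟩, he⟩ hnot
  refine if_neg ?_
  rintro rfl
  exact hnot ⟨⟨b, he⟩, rfl⟩

/-- Each edge at `x` occurs in `E` in both orientations, which cancels the factor `1 / 2`. -/
theorem energyProd_pointMass_right (hEsym : ∀ a b : V, (a, b) ∈ E → (b, a) ∈ E)
    (hloop : ∀ a : V, (a, a) ∉ E) {c : V → V → ℝ} (hcsym : ∀ a b : V, c a b = c b a)
    (f : V → ℂ) (x : V) {s : ℂ}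
    (hs : HasSum (fun y : {y // (x, y) ∈ E} => (c x y : ℂ) * conj (f x - f y)) s) :
    energyProd E c f (pointMass x) = s := by
  set F : V → ℂ := fun y => (c x y : ℂ) * conj (f x - f y)
  have hsplit : ∀ e : E,
      (c e.1.1 e.1.2 : ℂ) * conj (f e.1.1 - f e.1.2) * (pointMass x e.1.1 - pointMass x e.1.2) =
        (if e.1.1 = x then F e.1.2 else 0) + (if e.1.2 = x then F e.1.1 else 0) := by
    rintro ⟨⟨a, b⟩, he⟩
    by_cases ha : a = x
    · subst ha
      have hb : b ≠ a := by rintro rfl; exact hloop b he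
      simp [F, pointMass, hb]
    · by_cases hb : b = x
      · subst hb
        simp [F, pointMass, ha, hcsym a b]
        ring
      · simp [F, pointMass, ha, hb]
  have hswap : Function.Involutive fun e : E => (⟨e.1.swap, hEsym _ _ e.2⟩ : E) := fun e => rfl
  have hfst : HasSum (fun e : E => if e.1.1 = x then F e.1.2 else 0) s :=
    (hasSum_edges_ite_fst_iff x F s).2 hs
  have hsnd : HasSum (fun e : E => if e.1.2 = x then F e.1.1 else 0) s :=
    (hswap.toPerm _).hasSum_iff.2 hfst
  rw [energyProd, tsum_congr hsplit, (hfst.add hsnd).tsum_eq]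
  ring

variable (hEsym : ∀ a b : V, (a, b) ∈ E → (b, a) ∈ E) (hloop : ∀ a : V, (a, a) ∉ E)
  {c : V → V → ℝ} (hcsym : ∀ a b : V, c a b = c b a)
include hEsym hloop hcsym

theorem energyProd_pointMass_self {x : V} (hx : Summable fun y : {y // (x, y) ∈ E} => c x y) :
    energyProd E c (pointMass x) (pointMass x) = ((∑' y : {y // (x, y) ∈ E}, c x y : ℝ) : ℂ) := by
  refine energyProd_pointMass_right hEsym hloop hcsym _ x ?_
  have hne : ∀ y : {y // (x, y) ∈ E}, (y : V) ≠ x := by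
    rintro ⟨y, hy⟩ h
    exact hloop x (h ▸ hy)
  simpa [pointMass, hne] using Complex.hasSum_ofReal.2 hx.hasSum

theorem energyProd_pointMass_of_ne {x y : V} (hyx : y ≠ x) :
    energyProd E c (pointMass y) (pointMass x) =
      -{z | (x, z) ∈ E}.indicator (fun z => (c x z : ℂ)) y := by
  refine energyProd_pointMass_right hEsym hloop hcsym _ x ?_
  by_cases hxy : (x, y) ∈ E
  · rw [Set.indicator_of_mem (s := {z | (x, z) ∈ E}) hxy]
    convert hasSum_ite_eq (⟨y, hxy⟩ : {y // (x, y) ∈ E}) (-(c x y : ℂ)) using 1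
    ext ⟨z, hz⟩
    by_cases hzy : z = y
    · subst hzy
      simp [pointMass, hyx.symm]
    · simp [pointMass, hzy, hyx.symm]
  · rw [Set.indicator_of_notMem (s := {z | (x, z) ∈ E}) hxy, neg_zero]
    convert hasSum_zero with ⟨z, hz⟩
    have hzy : z ≠ y := by
      rintro rfl
      exact hxy hz
    simp [pointMass, hzy, hyx.symm]

theorem tsum_norm_energyProd_pointMass_sq {x : V}
    (hx : Summable fun y : {y // (x, y) ∈ E} => c x y)
    (hx2 : Summable fun y : {y // (x, y) ∈ E} => c x y ^ 2) :
    ∑' y, ‖energyProd E c (pointMass y) (pointMass x)‖ ^ 2 =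
      (∑' y : {y // (x, y) ∈ E}, c x y) ^ 2 + ∑' y : {y // (x, y) ∈ E}, c x y ^ 2 := by
  have hterm : ∀ y, ‖energyProd E c (pointMass y) (pointMass x)‖ ^ 2 =
      (if y = x then (∑' y : {y // (x, y) ∈ E}, c x y) ^ 2 else 0) +
        {z | (x, z) ∈ E}.indicator (fun z => c x z ^ 2) y := by
    intro y
    by_cases hyx : y = x
    · subst hyx
      simp [energyProd_pointMass_self hEsym hloop hcsym hx, hloop, Complex.norm_real]
    · rw [energyProd_pointMass_of_ne hEsym hloop hcsym hyx]
      by_cases hxy : (x, y) ∈ E <;> simp [hxy, hyx, Complex.norm_real]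
  rw [tsum_congr hterm]
  exact ((hasSum_ite_eq x _).add
    ((hasSum_subtype_iff_indicator (s := {z | (x, z) ∈ E}) (f := fun z => c x z ^ 2)).1
      hx2.hasSum)).tsum_eq

end Network

theorem stmt_14_general {V : Type*} [DecidableEq V]
    (E : Set (V × V)) (hEsym : ∀ a b : V, (a, b) ∈ E → (b, a) ∈ E)
    (hloop : ∀ a : V, (a, a) ∉ E)
    (c : V → V → ℝ) (hcsym : ∀ a b : V, c a b = c b a)
    (hcpos : ∀ p ∈ E, 0 < c p.1 p.2)
    (hdeg : ∀ z : V, Summable fun y : {y : V // (z, y) ∈ E} => c z y)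
    (x : V)
    (μ : Measure ℝ) [IsProbabilityMeasure μ]
    (hμ1 : ∫ t, t ∂μ = (energyProd E c (pointMass x) (pointMass x)).re)
    (hμ2 : ∫ t, t ^ 2 ∂μ =
      ∑' y : V, ‖energyProd E c (pointMass y) (pointMass x)‖ ^ 2) :
    (∫ t, t ∂μ = ∑' y : {y : V // (x, y) ∈ E}, c x y) ∧
    (∫ t, t ^ 2 ∂μ =
      (∑' y : {y : V // (x, y) ∈ E}, c x y) ^ 2 +
        ∑' y : {y : V // (x, y) ∈ E}, (c x y) ^ 2) ∧
    (∫ t, (t - ∑' y : {y : V // (x, y) ∈ E}, c x y) ^ 2 ∂μ =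
        ∑' y : {y : V // (x, y) ∈ E}, (c x y) ^ 2 ∧
      ∑' y : {y : V // (x, y) ∈ E}, (c x y) ^ 2 ≤
        (∑' y : {y : V // (x, y) ∈ E}, c x y) ^ 2) := by
  have hc0 : ∀ y : {y : V // (x, y) ∈ E}, 0 ≤ c x y := fun y => (hcpos _ y.2).le
  have hsq := summable_sq_of_nonneg hc0 (hdeg x)
  have h1 : ∫ t, t ∂μ = ∑' y : {y : V // (x, y) ∈ E}, c x y := by
    rw [hμ1, energyProd_pointMass_self hEsym hloop hcsym (hdeg x), Complex.ofReal_re]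
  have h2 := hμ2.trans (tsum_norm_energyProd_pointMass_sq hEsym hloop hcsym (hdeg x) hsq)
  exact ⟨h1, h2, integral_sub_sq_eq_of_moments h1 h2 (tsum_nonneg fun _ => sq_nonneg _),
    tsum_sq_le_sq_tsum_of_nonneg hc0 (hdeg x)⟩

/-- Let `(V, E, c)` be a connected network in which every vertex
has finite total conductance, and let `μ = μ_x^{(A)}` be the spectral measure
of the selfadjoint operator `A* Ā` at `δ_x`: it is a probability measure whose
first and second moments are, respectively, `‖δ_x‖²_{H_E}` and
`∑_y |⟨δ_y, δ_x⟩_{H_E}|²` (the general moment identities for `μ_x^{(A)}`).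
Then: (1) `∫ λ dμ = c(x)`; (2) `∫ λ² dμ = c(x)² + ∑_{y∼x} c_{xy}²`;
(3) the variance is `∫ (λ - c(x))² dμ = ∑_{y∼x} c_{xy}² ≤ c(x)²`. -/
theorem stmt_14 {V : Type*} [Countable V] [DecidableEq V]
    (E : Set (V × V)) (hEsym : ∀ a b : V, (a, b) ∈ E → (b, a) ∈ E)
    (hloop : ∀ a : V, (a, a) ∉ E)
    (c : V → V → ℝ) (hcsym : ∀ a b : V, c a b = c b a)
    (hcpos : ∀ p ∈ E, 0 < c p.1 p.2)
    (hconn : ∀ a b : V, Relation.ReflTransGen (fun s t => (s, t) ∈ E) a b)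
    (hdeg : ∀ z : V, Summable fun y : {y : V // (z, y) ∈ E} => c z y)
    (x : V)
    (μ : Measure ℝ) [IsProbabilityMeasure μ]
    (hμ1 : ∫ t, t ∂μ = (energyProd E c (pointMass x) (pointMass x)).re)
    (hμ2 : ∫ t, t ^ 2 ∂μ =
      ∑' y : V, ‖energyProd E c (pointMass y) (pointMass x)‖ ^ 2) :
    (∫ t, t ∂μ = ∑' y : {y : V // (x, y) ∈ E}, c x y) ∧
    (∫ t, t ^ 2 ∂μ =
      (∑' y : {y : V // (x, y) ∈ E}, c x y) ^ 2 +
        ∑' y : {y : V // (x, y) ∈ E}, (c x y) ^ 2) ∧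
    (∫ t, (t - ∑' y : {y : V // (x, y) ∈ E}, c x y) ^ 2 ∂μ =
        ∑' y : {y : V // (x, y) ∈ E}, (c x y) ^ 2 ∧
      ∑' y : {y : V // (x, y) ∈ E}, (c x y) ^ 2 ≤
        (∑' y : {y : V // (x, y) ∈ E}, c x y) ^ 2) :=
  stmt_14_general E hEsym hloop c hcsym hcpos hdeg x μ hμ1 hμ2
end

section
/- Let $0 < x_1 < x_2 < \cdots < x_n < 1$. Then the $n \times n$ matrix with entries $K(i,j) = \min(x_i, x_j) - x_i x_j$ (the Brownian bridge covariance kernel) has determinant $\det K = x_1 (x_2 - x_1)(x_3 - x_2)\cdots(x_n - x_{n-1})(1 - x_n)$. -/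
open Matrix Finset

/-- For `0 < x₁ < x₂ < ⋯ < xₙ < 1`, the matrix with entries
`min (xᵢ, xⱼ) - xᵢ xⱼ` (the Brownian bridge covariance kernel) has determinant
`x₁ (x₂ - x₁) ⋯ (xₙ - xₙ₋₁) (1 - xₙ)`. -/
theorem stmt_16 (n : ℕ) (x : Fin (n + 1) → ℝ) (h0 : 0 < x 0)
    (hmono : StrictMono x) (hlast : x (Fin.last n) < 1) :
    (Matrix.of fun i j : Fin (n + 1) => min (x i) (x j) - x i * x j).det
      = x 0 * (∏ i : Fin n, (x i.succ - x i.castSucc)) * (1 - x (Fin.last n)) := by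
  set d : Fin (n + 1) → ℝ :=
    Fin.cases (x 0) (fun i => x i.succ - x i.castSucc) with hd
  -- telescoping sum
  have hs : ∀ i : Fin (n + 1), (∑ k, if k ≤ i then d k else 0) = x i := by
    intro i
    induction i using Fin.induction with
    | zero =>
      have : ∀ k : Fin (n + 1), (if k ≤ 0 then d k else 0) = (if k = 0 then d k else 0) := by
        intro k; simp [Fin.le_zero_iff]
      simp only [this, Finset.sum_ite_eq', Finset.mem_univ, if_true]
      simp [hd]
    | succ i ih =>
      have key : ∀ k : Fin (n + 1), (if k ≤ i.succ then d k else 0)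
          = (if k ≤ i.castSucc then d k else 0) + (if k = i.succ then d k else 0) := by
        intro k
        simp only [Fin.le_def, Fin.ext_iff, Fin.val_succ, Fin.coe_castSucc]
        split_ifs <;> first | ring1 | (exfalso; omega)
      simp only [key, Finset.sum_add_distrib, ih, Finset.sum_ite_eq', Finset.mem_univ, if_true]
      simp [hd]
  set L : Matrix (Fin (n + 1)) (Fin (n + 1)) ℝ :=
    Matrix.of fun i k => if k ≤ i then (1 : ℝ) else 0 with hL
  -- factorization lemmas
  have hM : ∀ i j, (L * Matrix.diagonal d * Lᵀ) i j = min (x i) (x j) := by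
    intro i j
    have : ∀ k, (L * Matrix.diagonal d) i k * Lᵀ k j
        = if k ≤ i ⊓ j then d k else 0 := by
      intro k
      simp only [Matrix.mul_diagonal, hL, Matrix.of_apply, Matrix.transpose_apply]
      by_cases h1 : k ≤ i <;> by_cases h2 : k ≤ j <;>
        simp [h1, h2, le_inf_iff]
    rw [Matrix.mul_apply]
    simp only [this]
    rw [hs (i ⊓ j), hmono.monotone.map_min]
  have hcol : ∀ i (u : Unit), (L * Matrix.replicateCol Unit d) i u = x i := by
    intro i u
    rw [Matrix.mul_apply]
    rw [← hs i]
    refine Finset.sum_congr rfl fun k _ => ?_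
    simp only [hL, Matrix.of_apply, Matrix.replicateCol_apply]
    split_ifs <;> ring
  have hrow : ∀ (u : Unit) j, (Matrix.replicateRow Unit d * Lᵀ) u j = x j := by
    intro u j
    rw [Matrix.mul_apply]
    rw [← hs j]
    refine Finset.sum_congr rfl fun k _ => ?_
    simp only [hL, Matrix.of_apply, Matrix.transpose_apply, Matrix.replicateRow_apply]
    split_ifs <;> ring
  have hR : ∀ i j, (L * (Matrix.replicateCol Unit d * Matrix.replicateRow Unit d) * Lᵀ) i j = x i * x j := by
    intro i j
    have : L * (Matrix.replicateCol Unit d * Matrix.replicateRow Unit d) * Lᵀ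
        = (L * Matrix.replicateCol Unit d) * (Matrix.replicateRow Unit d * Lᵀ) := by
      rw [Matrix.mul_assoc, Matrix.mul_assoc, Matrix.mul_assoc]
    rw [this, Matrix.mul_apply]
    simp [hcol, hrow]
  have hfac : (Matrix.of fun i j : Fin (n + 1) => min (x i) (x j) - x i * x j)
      = L * (Matrix.diagonal d - Matrix.replicateCol Unit d * Matrix.replicateRow Unit d) * Lᵀ := by
    ext i j
    rw [Matrix.mul_sub, Matrix.sub_mul, Matrix.sub_apply, hM, hR]
    simp
  -- middle matrix as diagonal * (1 + col * row)
  have hmid : Matrix.diagonal d - Matrix.replicateCol Unit d * Matrix.replicateRow Unit d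
      = Matrix.diagonal d * (1 + Matrix.replicateCol Unit (fun _ => (-1 : ℝ)) * Matrix.replicateRow Unit d) := by
    ext i j
    rw [Matrix.diagonal_mul, Matrix.sub_apply, Matrix.add_apply, Matrix.mul_apply,
      Matrix.mul_apply]
    simp only [Finset.univ_unique, Finset.sum_singleton, Matrix.replicateCol_apply, Matrix.replicateRow_apply,
      Matrix.diagonal_apply, Matrix.one_apply]
    split_ifs <;> ring
  -- determinant of L
  have hdetL : L.det = 1 := by
    have htri : L.BlockTriangular OrderDual.toDual := by
      intro i j hij
      simp only [hL, Matrix.of_apply]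
      rw [if_neg]
      exact not_le.2 hij
    rw [Matrix.det_of_lowerTriangular L htri]
    simp [hL]
  have hsum : (∑ k, d k) = x (Fin.last n) := by
    rw [← hs (Fin.last n)]
    exact Finset.sum_congr rfl fun k _ => by simp [Fin.le_last]
  have hprod : (∏ k, d k) = x 0 * ∏ i : Fin n, (x i.succ - x i.castSucc) := by
    rw [Fin.prod_univ_succ]
    simp [hd]
  rw [hfac, hmid, Matrix.det_mul, Matrix.det_mul, Matrix.det_mul, hdetL,
    Matrix.det_transpose, hdetL, Matrix.det_diagonal, Matrix.det_one_add_replicateCol_mul_replicateRow,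
    hprod]
  have : (d ⬝ᵥ fun _ => (-1 : ℝ)) = -(∑ k, d k) := by
    simp [dotProduct, Finset.sum_neg_distrib]
  rw [this, hsum]
  ring
end

section
/- Let $V = \{x_i\}_{i\ge 1}$ with $0 < x_1 < x_2 < \cdots$, and let $\mathscr{H}_V$ be the RKHS of the restricted Brownian motion kernel $k(x_i, x_j) = \min(x_i, x_j)$ on $V \times V$. Then for each $i \ge 2$, $\delta_{x_i} \in \mathscr{H}_V$, the point mass lies in the span of $k_{x_{i-1}}, k_{x_i}, k_{x_{i+1}}$, and $\|\delta_{x_i}\|_{\mathscr{H}_V}^2 = \frac{x_{i+1} - x_{i-1}}{(x_i - x_{i-1})(x_{i+1} - x_i)}$. For $i = 1$: $\delta_{x_1} = \frac{x_2}{x_1(x_2 - x_1)} k_{x_1} - \frac{1}{x_2 - x_1} k_{x_2}$ and $\|\delta_{x_1}\|_{\mathscr{H}_V}^2 = \frac{x_2}{x_1 (x_2 - x_1)}$. -/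
/-!
For a combination `g = α k_a + β k_b + γ k_c` the function `t ↦ ⟪k_t, g⟫ = α min t a + β min t b
+ γ min t c` is piecewise linear with kinks at `a < b < c`. The coefficients below make it the hat
function which vanishes outside `(a, c)` and equals `1` at `b`, so `g` represents `δ_b` on `V`, and
`‖g‖² = ⟪g, g⟫ = α ⟪k_a, g⟫ + β ⟪k_b, g⟫ + γ ⟪k_c, g⟫ = β`. The first point is the case `a = 0`,
`k_a = 0`: the Brownian motion kernel vanishes at the origin.
-/

open RealInnerProductSpace

section Tent

variable {a b c t : ℝ}

noncomputable def tent (a b c t : ℝ) : ℝ :=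
  -(b - a)⁻¹ * min t a + (c - a) / ((b - a) * (c - b)) * min t b - (c - b)⁻¹ * min t c

theorem tent_of_le_left (hab : a < b) (hbc : b < c) (ht : t ≤ a) : tent a b c t = 0 := by
  rw [tent, min_eq_left ht, min_eq_left (ht.trans hab.le), min_eq_left (by linarith)]
  field_simp [sub_ne_zero.2 hab.ne', sub_ne_zero.2 hbc.ne']
  ring

theorem tent_self_middle (hab : a < b) (hbc : b < c) : tent a b c b = 1 := by
  rw [tent, min_eq_right hab.le, min_self, min_eq_left hbc.le]
  field_simp [sub_ne_zero.2 hab.ne', sub_ne_zero.2 hbc.ne']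
  ring

theorem tent_of_right_le (hab : a < b) (hbc : b < c) (ht : c ≤ t) : tent a b c t = 0 := by
  rw [tent, min_eq_right (by linarith), min_eq_right (by linarith), min_eq_right ht]
  field_simp [sub_ne_zero.2 hab.ne', sub_ne_zero.2 hbc.ne']
  ring

theorem tent_apply_eq_ite {x : ℕ → ℝ} (hx : StrictMono x) {i : ℕ} (ha : a < x i)
    (hleft : ∀ j < i, x j ≤ a) (j : ℕ) :
    tent a (x i) (x (i + 1)) (x j) = if j = i then 1 else 0 := by
  have hi : x i < x (i + 1) := hx (Nat.lt_succ_self i)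
  rcases lt_trichotomy j i with hj | rfl | hj
  · rw [tent_of_le_left ha hi (hleft j hj), if_neg hj.ne]
  · rw [tent_self_middle ha hi, if_pos rfl]
  · rw [tent_of_right_le ha hi (hx.monotone hj), if_neg hj.ne']

end Tent

section TentVec

variable {H : Type*} [NormedAddCommGroup H] [InnerProductSpace ℝ H] {a b c t : ℝ} {u v w y : H}

noncomputable def tentVec (a b c : ℝ) (u v w : H) : H :=
  -(b - a)⁻¹ • u + ((c - a) / ((b - a) * (c - b))) • v - (c - b)⁻¹ • w

theorem inner_tentVec (hu : ⟪y, u⟫ = min t a) (hv : ⟪y, v⟫ = min t b) (hw : ⟪y, w⟫ = min t c) :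
    ⟪y, tentVec a b c u v w⟫ = tent a b c t := by
  rw [tentVec, tent, inner_sub_right, inner_add_right, real_inner_smul_right,
    real_inner_smul_right, real_inner_smul_right, hu, hv, hw]

theorem tentVec_mem_span : tentVec a b c u v w ∈ Submodule.span ℝ ({u, v, w} : Set H) := by
  have hu : u ∈ Submodule.span ℝ ({u, v, w} : Set H) := Submodule.subset_span (by simp)
  have hv : v ∈ Submodule.span ℝ ({u, v, w} : Set H) := Submodule.subset_span (by simp)
  have hw : w ∈ Submodule.span ℝ ({u, v, w} : Set H) := Submodule.subset_span (by simp)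
  exact Submodule.sub_mem _ (Submodule.add_mem _ (Submodule.smul_mem _ _ hu)
    (Submodule.smul_mem _ _ hv)) (Submodule.smul_mem _ _ hw)

theorem norm_tentVec_sq (hu : ⟪u, tentVec a b c u v w⟫ = 0) (hv : ⟪v, tentVec a b c u v w⟫ = 1)
    (hw : ⟪w, tentVec a b c u v w⟫ = 0) :
    ‖tentVec a b c u v w‖ ^ 2 = (c - a) / ((b - a) * (c - b)) := by
  rw [← real_inner_self_eq_norm_sq]
  nth_rw 1 [tentVec]
  rw [inner_sub_left, inner_add_left, real_inner_smul_left, real_inner_smul_left,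
    real_inner_smul_left, hu, hv, hw]
  ring

end TentVec

theorem stmt_17_general {H : Type*} [NormedAddCommGroup H] [InnerProductSpace ℝ H]
    (x : ℕ → ℝ) (h0 : 0 < x 0) (hmono : StrictMono x)
    (K : ℕ → H)
    (hk : ∀ i j : ℕ, (inner ℝ (K i) (K j) : ℝ) = min (x i) (x j)) :
    (∀ i : ℕ, 1 ≤ i →
      ∃ g : H, (∀ j : ℕ, (inner ℝ (K j) g : ℝ) = if j = i then 1 else 0) ∧
        g ∈ Submodule.span ℝ ({K (i - 1), K i, K (i + 1)} : Set H) ∧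
        ‖g‖ ^ 2 = (x (i + 1) - x (i - 1)) /
          ((x i - x (i - 1)) * (x (i + 1) - x i))) ∧
    ((∀ j : ℕ,
        (inner ℝ (K j) ((x 1 / (x 0 * (x 1 - x 0))) • K 0
            - (1 / (x 1 - x 0)) • K 1) : ℝ) = if j = 0 then 1 else 0) ∧
      ‖(x 1 / (x 0 * (x 1 - x 0))) • K 0 - (1 / (x 1 - x 0)) • K 1‖ ^ 2
        = x 1 / (x 0 * (x 1 - x 0))) := by
  constructor
  · intro i hi
    obtain ⟨p, rfl⟩ : ∃ p, i = p + 1 := ⟨i - 1, by omega⟩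
    simp only [Nat.add_sub_cancel]
    set g := tentVec (x p) (x (p + 1)) (x (p + 2)) (K p) (K (p + 1)) (K (p + 2))
    have hg : ∀ j, ⟪K j, g⟫ = if j = p + 1 then 1 else 0 := fun j => by
      rw [inner_tentVec (hk j p) (hk j (p + 1)) (hk j (p + 2))]
      exact tent_apply_eq_ite hmono (hmono p.lt_succ_self)
        (fun _ hj => hmono.monotone (Nat.le_of_lt_succ hj)) j
    exact ⟨g, hg, tentVec_mem_span, norm_tentVec_sq (by rw [hg, if_neg (by omega)])
      (by rw [hg, if_pos rfl]) (by rw [hg, if_neg (by omega)])⟩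
  · have hg0 : (x 1 / (x 0 * (x 1 - x 0))) • K 0 - (1 / (x 1 - x 0)) • K 1
        = tentVec 0 (x 0) (x 1) 0 (K 0) (K 1) := by
      simp [tentVec]
    have hg : ∀ j, ⟪K j, tentVec 0 (x 0) (x 1) 0 (K 0) (K 1)⟫ = if j = 0 then 1 else 0 :=
      fun j => by
        have hxj : min (x j) 0 = 0 := min_eq_right (h0.trans_le (hmono.monotone j.zero_le)).le
        rw [inner_tentVec (by rw [inner_zero_right, hxj]) (hk j 0) (hk j 1)]
        exact tent_apply_eq_ite hmono h0 (fun _ h => absurd h (Nat.not_lt_zero _)) j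
    rw [hg0]
    refine ⟨hg, ?_⟩
    rw [norm_tentVec_sq (inner_zero_left _) (by rw [hg, if_pos rfl])
      (by rw [hg, if_neg one_ne_zero]), sub_zero, sub_zero]

/-- Let `V = {x₀ < x₁ < ⋯} ⊂ (0,∞)` and let `H` be the RKHS of
the restricted Brownian motion kernel `k (xᵢ, xⱼ) = min (xᵢ, xⱼ)` (modeled
abstractly: kernel vectors `K i` with `⟪K i, K j⟫ = min (x i) (x j)` and dense
span; the point mass `δ_{xᵢ}` belongs to `H` iff some `g ∈ H` satisfies
`⟪K j, g⟫ = δ_{ij}`). Then (interior points, `i ≥ 1` in 0-based indexing):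
`δ_{xᵢ} ∈ H`, it lies in `span {K (i-1), K i, K (i+1)}`, and
`‖δ_{xᵢ}‖² = (x_{i+1} - x_{i-1}) / ((xᵢ - x_{i-1})(x_{i+1} - xᵢ))`;
and for the first point:
`δ_{x₀} = (x₁ / (x₀ (x₁ - x₀))) • K 0 - (1/(x₁ - x₀)) • K 1`, with
`‖δ_{x₀}‖² = x₁ / (x₀ (x₁ - x₀))`. -/
theorem stmt_17 {H : Type*} [NormedAddCommGroup H] [InnerProductSpace ℝ H]
    [CompleteSpace H]
    (x : ℕ → ℝ) (h0 : 0 < x 0) (hmono : StrictMono x)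
    (K : ℕ → H)
    (hk : ∀ i j : ℕ, (inner ℝ (K i) (K j) : ℝ) = min (x i) (x j))
    (hdense : (Submodule.span ℝ (Set.range K)).topologicalClosure = ⊤) :
    (∀ i : ℕ, 1 ≤ i →
      ∃ g : H, (∀ j : ℕ, (inner ℝ (K j) g : ℝ) = if j = i then 1 else 0) ∧
        g ∈ Submodule.span ℝ ({K (i - 1), K i, K (i + 1)} : Set H) ∧
        ‖g‖ ^ 2 = (x (i + 1) - x (i - 1)) /
          ((x i - x (i - 1)) * (x (i + 1) - x i))) ∧
    ((∀ j : ℕ,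
        (inner ℝ (K j) ((x 1 / (x 0 * (x 1 - x 0))) • K 0
            - (1 / (x 1 - x 0)) • K 1) : ℝ) = if j = 0 then 1 else 0) ∧
      ‖(x 1 / (x 0 * (x 1 - x 0))) • K 0 - (1 / (x 1 - x 0)) • K 1‖ ^ 2
        = x 1 / (x 0 * (x 1 - x 0))) :=
  stmt_17_general x h0 hmono K hk
end

section
/- Let $k_b(x,y) = \sum_{n=0}^{\min(x,y)} \binom{x}{n}\binom{y}{n}$ on $V = \{0,1,2,\ldots\}$, and let $K_n = (k_b(x,y))_{0 \le x,y \le n}$. Then $K_n = L_n L_n^{tr}$ where $L_n$ is the lower-triangular Pascal matrix $(L_n)_{xy} = \binom{x}{y}$ ($y \le x$), $K_n$ is invertible with $K_n^{-1} = (L_n^{tr})^{-1} L_n^{-1}$, and the diagonal entries of $K_n^{-1}$ are $(K_n^{-1})_{xx} = \sum_{k=x}^{n} \binom{k}{x}^2$. Consequently, $\sup_n (K_n^{-1})_{xx} = \sum_{k=x}^{\infty}\binom{k}{x}^2 = \infty$, so no point mass $\delta_x$ belongs to the binomial RKHS $\mathscr{H}(k_b)$. -/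
/-!
The Gram matrix of the binomial kernel factors as `L Lᵀ` with `L` the Pascal matrix, whose
inverse is the signed Pascal matrix (binomial inversion). Hence `(K_n⁻¹)_{xx}` is the squared
norm of the `x`-th column of `L⁻¹`, namely `∑_{k=x}^n C(k,x)²`, which grows at least like `n - x`.
If some `g` represented `δ_x`, then `w = ∑_y (K_n⁻¹)_{yx} k_y` would satisfy
`‖w‖² = ⟪w, g⟫ = (K_n⁻¹)_{xx}`, so Cauchy–Schwarz would bound these entries by `‖g‖²`.
-/

open Matrix Finset

theorem sum_range_choose_mul_neg_one_pow_mul_choose {R : Type*} [CommRing R] (i j : ℕ) :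
    ∑ k ∈ range (i + 1), (i.choose k : R) * ((-1) ^ (k - j) * k.choose j) =
      if i = j then 1 else 0 := by
  rcases lt_or_ge i j with hij | hji
  · rw [if_neg hij.ne]
    refine sum_eq_zero fun k hk => ?_
    rw [Nat.choose_eq_zero_of_lt (by grind : k < j)]
    simp
  · obtain ⟨d, rfl⟩ := Nat.exists_eq_add_of_le hji
    have hshift : ∀ t, ((j + d).choose (j + t) : R) * ((-1) ^ (j + t - j) * (j + t).choose j) =
        (j + d).choose j * ((-1) ^ t * d.choose t) := fun t => by
      have h : ((j + d).choose (j + t) : R) * (j + t).choose j = (j + d).choose j * d.choose t := by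
        have := Nat.choose_mul (n := j + d) (Nat.le_add_right j t)
        rw [Nat.add_sub_cancel_left, Nat.add_sub_cancel_left] at this
        rw [← Nat.cast_mul, ← Nat.cast_mul, this]
      rw [Nat.add_sub_cancel_left]
      linear_combination (-1 : R) ^ t * h
    have halt : ∑ t ∈ range (d + 1), ((-1) ^ t * d.choose t : R) = if d = 0 then 1 else 0 := by
      exact_mod_cast congrArg (Int.cast : ℤ → R) Int.alternating_sum_range_choose
    rw [show j + d + 1 = j + (d + 1) by ring, sum_range_add,
      sum_eq_zero fun k hk => by simp [Nat.choose_eq_zero_of_lt (mem_range.1 hk)], zero_add]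
    simp_rw [hshift, ← mul_sum, halt]
    rcases eq_or_ne d 0 with rfl | hd
    · simp
    · simp [hd]

section Pascal

variable (R : Type*)

-- No `if j ≤ i` is needed: `Nat.choose i j = 0` for `i < j` makes both matrices triangular.
def pascal [NatCast R] (n : ℕ) : Matrix (Fin (n + 1)) (Fin (n + 1)) R :=
  of fun i j => ((i : ℕ).choose j : R)

def signedPascal [Ring R] (n : ℕ) : Matrix (Fin (n + 1)) (Fin (n + 1)) R :=
  of fun i j => (-1) ^ ((i : ℕ) - j) * ((i : ℕ).choose j : R)

def binomialKernel [Semiring R] (x y : ℕ) : R :=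
  ∑ m ∈ range (min x y + 1), (x.choose m : R) * (y.choose m : R)

variable {R}

theorem pascal_mul_transpose [Semiring R] (n : ℕ) :
    pascal R n * (pascal R n)ᵀ = of fun i j : Fin (n + 1) => binomialKernel R i j := by
  ext i j
  rw [mul_apply, of_apply, binomialKernel]
  simp only [pascal, transpose_apply, of_apply]
  rw [Fin.sum_univ_eq_sum_range (fun m => ((i : ℕ).choose m : R) * ((j : ℕ).choose m)) (n + 1)]
  refine (sum_subset (fun m hm => ?_) fun m _ hm => ?_).symm
  · simp only [mem_range] at hm ⊢; omega
  · rw [mem_range, not_lt, Nat.succ_le_iff, min_lt_iff] at hm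
    rcases hm with hm | hm <;> simp [Nat.choose_eq_zero_of_lt hm]

theorem pascal_mul_signedPascal [CommRing R] (n : ℕ) : pascal R n * signedPascal R n = 1 := by
  ext i j
  rw [mul_apply, one_apply]
  simp only [pascal, signedPascal, of_apply]
  rw [Fin.sum_univ_eq_sum_range
      (fun k => ((i : ℕ).choose k : R) * ((-1) ^ (k - j) * (k.choose j : R))) (n + 1),
    ← sum_subset (range_subset_range.2 (Nat.succ_le_succ (Fin.is_le i))) fun k _ hk => by
      simp [Nat.choose_eq_zero_of_lt (Nat.lt_of_succ_le (not_lt.1 (mem_range.not.1 hk)))],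
    sum_range_choose_mul_neg_one_pow_mul_choose]
  simp only [Fin.val_inj]

theorem inv_pascal [CommRing R] (n : ℕ) : (pascal R n)⁻¹ = signedPascal R n :=
  inv_eq_right_inv (pascal_mul_signedPascal n)

theorem isUnit_pascal [CommRing R] (n : ℕ) : IsUnit (pascal R n) :=
  (isUnit_iff_isUnit_det _).2 (isUnit_det_of_right_inverse (pascal_mul_signedPascal n))

theorem pascal_mul_transpose_inv_apply_self [CommRing R] (n : ℕ) (i : Fin (n + 1)) :
    (pascal R n * (pascal R n)ᵀ)⁻¹ i i = ∑ m ∈ Icc (i : ℕ) n, (m.choose i : R) ^ 2 := by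
  rw [Matrix.mul_inv_rev, ← transpose_nonsing_inv, inv_pascal, mul_apply]
  simp only [signedPascal, transpose_apply, of_apply]
  have hsign : ∀ k : ℕ, ((-1) ^ (k - i) * (k.choose i : R)) * ((-1) ^ (k - i) * k.choose i) =
      (k.choose i : R) ^ 2 := fun k => by
    rw [mul_mul_mul_comm, ← mul_pow, neg_one_mul, neg_neg, one_pow, one_mul, sq]
  simp only [hsign]
  rw [Fin.sum_univ_eq_sum_range (fun k => (k.choose i : R) ^ 2) (n + 1)]
  refine (sum_subset (fun k hk => ?_) fun k hk hk' => ?_).symm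
  · simp only [mem_Icc, mem_range] at hk ⊢; omega
  · simp only [mem_Icc, mem_range] at hk hk'
    simp [Nat.choose_eq_zero_of_lt (by omega : k < i)]

end Pascal

theorem tendsto_sum_Icc_choose_sq_atTop (x : ℕ) :
    Filter.Tendsto (fun n : ℕ => ∑ m ∈ Icc x n, (m.choose x : ℝ) ^ 2)
      Filter.atTop Filter.atTop := by
  refine Filter.tendsto_atTop_mono (fun n => ?_)
    (tendsto_natCast_atTop_atTop.comp (Filter.tendsto_sub_atTop_nat x))
  calc ((n - x : ℕ) : ℝ) ≤ #(Icc x n) • (1 : ℝ) := by simp; omega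
    _ ≤ ∑ m ∈ Icc x n, (m.choose x : ℝ) ^ 2 := card_nsmul_le_sum _ _ _ fun m hm =>
      one_le_pow₀ (by exact_mod_cast Nat.choose_pos (mem_Icc.1 hm).1)

theorem inv_gram_apply_self_le_norm_sq {ι H : Type*} [Fintype ι] [DecidableEq ι]
    [NormedAddCommGroup H] [InnerProductSpace ℝ H] {v : ι → H} (hv : IsUnit (gram ℝ v))
    {a : ι} {g : H} (hg : ∀ i, inner ℝ (v i) g = if i = a then 1 else 0) :
    (gram ℝ v)⁻¹ a a ≤ ‖g‖ ^ 2 := by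
  set w := ∑ j, (gram ℝ v)⁻¹ j a • v j
  have hvw : ∀ i, inner ℝ (v i) w = if i = a then 1 else 0 := fun i => by
    rw [← one_apply, ← mul_nonsing_inv _ ((isUnit_iff_isUnit_det _).1 hv), mul_apply]
    simp [w, inner_sum, real_inner_smul_right, gram_apply, mul_comm]
  have hwy : ∀ y, inner ℝ w y = ∑ j, (gram ℝ v)⁻¹ j a * inner ℝ (v j) y := fun y => by
    simp only [w, sum_inner, real_inner_smul_left]
  have hww : ‖w‖ ^ 2 = (gram ℝ v)⁻¹ a a := by
    rw [← real_inner_self_eq_norm_sq, hwy w]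
    simp [hvw]
  have hwg : ‖w‖ ^ 2 ≤ ‖w‖ * ‖g‖ := by
    rw [hww]
    simpa [hwy g, hg] using real_inner_le_norm w g
  have hnorm : ‖w‖ ≤ ‖g‖ := by nlinarith [norm_nonneg w, norm_nonneg g]
  rw [← hww]
  exact pow_le_pow_left₀ (norm_nonneg w) hnorm 2

theorem stmt_19_general {H : Type*} [NormedAddCommGroup H] [InnerProductSpace ℝ H]
    (kb : ℕ → ℕ → ℝ)
    (hkb : ∀ x y : ℕ, kb x y =
      ∑ m ∈ Finset.range (min x y + 1), (x.choose m : ℝ) * (y.choose m : ℝ))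
    (Kv : ℕ → H) (hKv : ∀ x y : ℕ, (inner ℝ (Kv x) (Kv y) : ℝ) = kb x y)
    (L : (n : ℕ) → Matrix (Fin (n + 1)) (Fin (n + 1)) ℝ)
    (hL : ∀ (n : ℕ) (i j : Fin (n + 1)),
      L n i j = if (j : ℕ) ≤ (i : ℕ) then ((i : ℕ).choose (j : ℕ) : ℝ) else 0)
    (Kmat : (n : ℕ) → Matrix (Fin (n + 1)) (Fin (n + 1)) ℝ)
    (hKmat : ∀ (n : ℕ) (i j : Fin (n + 1)), Kmat n i j = kb i j) :
    (∀ n : ℕ, Kmat n = L n * (L n)ᵀ) ∧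
    (∀ n : ℕ, IsUnit (Kmat n) ∧ (Kmat n)⁻¹ = ((L n)ᵀ)⁻¹ * (L n)⁻¹) ∧
    (∀ (n : ℕ) (i : Fin (n + 1)),
      (Kmat n)⁻¹ i i = ∑ m ∈ Finset.Icc (i : ℕ) n, ((m.choose i : ℝ)) ^ 2) ∧
    (∀ x : ℕ, Filter.Tendsto
      (fun n : ℕ => ∑ m ∈ Finset.Icc x n, ((m.choose x : ℝ)) ^ 2)
      Filter.atTop Filter.atTop) ∧
    (∀ x : ℕ, ¬ ∃ g : H, ∀ y : ℕ,
      (inner ℝ (Kv y) g : ℝ) = if y = x then 1 else 0) := by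
  have hLpascal : ∀ n, L n = pascal ℝ n := fun n => ext fun i j => by
    rw [hL]
    split_ifs with h
    · rfl
    · simp [pascal, Nat.choose_eq_zero_of_lt (not_le.1 h)]
  have hK : ∀ n, Kmat n = pascal ℝ n * (pascal ℝ n)ᵀ := fun n => by
    ext i j
    rw [pascal_mul_transpose, of_apply, hKmat, hkb, binomialKernel]
  have hgram : ∀ n, gram ℝ (fun i : Fin (n + 1) => Kv i) = Kmat n := fun n => by
    ext i j
    rw [gram_apply, hKv, hKmat]
  have hunit : ∀ n, IsUnit (Kmat n) := fun n =>
    hK n ▸ (isUnit_pascal n).mul ((isUnit_transpose _).2 (isUnit_pascal n))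
  have hdiag : ∀ (n : ℕ) (i : Fin (n + 1)),
      (Kmat n)⁻¹ i i = ∑ m ∈ Icc (i : ℕ) n, (m.choose i : ℝ) ^ 2 := fun n i => by
    rw [hK, pascal_mul_transpose_inv_apply_self]
  refine ⟨fun n => hLpascal n ▸ hK n,
    fun n => ⟨hunit n, by rw [hK, hLpascal, Matrix.mul_inv_rev]⟩, hdiag,
    tendsto_sum_Icc_choose_sq_atTop, ?_⟩
  rintro x ⟨g, hg⟩
  have hbound : ∀ n ≥ x, ∑ m ∈ Icc x n, (m.choose x : ℝ) ^ 2 ≤ ‖g‖ ^ 2 := fun n hn => by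
    have := inv_gram_apply_self_le_norm_sq ((hgram n).symm ▸ hunit n) (a := ⟨x, by omega⟩)
      (g := g) fun i => by simp [hg, Fin.ext_iff]
    rwa [hgram, hdiag] at this
  obtain ⟨n, hn, hgt⟩ := ((Filter.eventually_ge_atTop x).and
    ((tendsto_sum_Icc_choose_sq_atTop x).eventually_gt_atTop (‖g‖ ^ 2))).exists
  exact (hbound n hn).not_gt hgt

/-- Let `k_b (x,y) = ∑_{n=0}^{min x y} C(x,n) C(y,n)` be the
binomial kernel on `V = {0,1,2,…}`, `K n` its Gram matrix of size `n+1`, and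
`L n` the lower-triangular Pascal matrix. Then `K n = L n (L n)ᵀ`; `K n` is
invertible with `(K n)⁻¹ = ((L n)ᵀ)⁻¹ (L n)⁻¹`; the diagonal entries are
`((K n)⁻¹)_{xx} = ∑_{k=x}^{n} C(k,x)²`; consequently
`sup_n ((K n)⁻¹)_{xx} = ∑_{k=x}^{∞} C(k,x)² = ∞` (the diagonal entries tend to
`∞`), so no point mass `δ_x` belongs to the RKHS `H(k_b)` (modeled abstractly
by kernel vectors `Kv x` with `⟪Kv x, Kv y⟫ = k_b x y` and dense span). -/
theorem stmt_19 {H : Type*} [NormedAddCommGroup H] [InnerProductSpace ℝ H]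
    [CompleteSpace H]
    (kb : ℕ → ℕ → ℝ)
    (hkb : ∀ x y : ℕ, kb x y =
      ∑ m ∈ Finset.range (min x y + 1), (x.choose m : ℝ) * (y.choose m : ℝ))
    (Kv : ℕ → H) (hKv : ∀ x y : ℕ, (inner ℝ (Kv x) (Kv y) : ℝ) = kb x y)
    (hdense : (Submodule.span ℝ (Set.range Kv)).topologicalClosure = ⊤)
    (L : (n : ℕ) → Matrix (Fin (n + 1)) (Fin (n + 1)) ℝ)
    (hL : ∀ (n : ℕ) (i j : Fin (n + 1)),
      L n i j = if (j : ℕ) ≤ (i : ℕ) then ((i : ℕ).choose (j : ℕ) : ℝ) else 0)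
    (Kmat : (n : ℕ) → Matrix (Fin (n + 1)) (Fin (n + 1)) ℝ)
    (hKmat : ∀ (n : ℕ) (i j : Fin (n + 1)), Kmat n i j = kb i j) :
    (∀ n : ℕ, Kmat n = L n * (L n)ᵀ) ∧
    (∀ n : ℕ, IsUnit (Kmat n) ∧ (Kmat n)⁻¹ = ((L n)ᵀ)⁻¹ * (L n)⁻¹) ∧
    (∀ (n : ℕ) (i : Fin (n + 1)),
      (Kmat n)⁻¹ i i = ∑ m ∈ Finset.Icc (i : ℕ) n, ((m.choose i : ℝ)) ^ 2) ∧
    (∀ x : ℕ, Filter.Tendsto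
      (fun n : ℕ => ∑ m ∈ Finset.Icc x n, ((m.choose x : ℝ)) ^ 2)
      Filter.atTop Filter.atTop) ∧
    (∀ x : ℕ, ¬ ∃ g : H, ∀ y : ℕ,
      (inner ℝ (Kv y) g : ℝ) = if y = x then 1 else 0) :=
  stmt_19_general kb hkb Kv hKv L hL Kmat hKmat
end
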